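/- arXiv:2011.02239 — 9 statements merged into one kernel-verified Lean document; each statement's English description precedes it below -/
import Mathlib

section
/- Let (Z, m) be a complete metric space and let ψ : [0,∞) → [0,∞) be a continuous, increasing function with ψ(x) < x for all x > 0. If an operator T : Z → Z satisfies m(Tv₁, Tv₂) ≤ ψ(m(v₁, v₂)) for all v₁, v₂ ∈ Z, then T has a unique fixed point v* ∈ Z, and for every v ∈ Z the iterates satisfy m(T⁽ⁿ⁾v, v*) → 0 as n → ∞, where T⁽ⁿ⁾ denotes the n-fold composition of T with itself. -/
open NNReal Filter Function Metric Set

/-!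
Iterating the comparison function `ψ` drives every `x ≥ 0` to `0`, since the decreasing
sequence `ψ^[n] x` converges to a fixed point of `ψ`, and `0` is the only one. The contraction
estimate then gives `d(Tⁿa, Tⁿb) ≤ ψⁿ(d(a, b)) → 0`, so any two orbits merge. Orbits are Cauchy
because, once `d(Tⁿ⁺¹v, Tⁿv) ≤ ε - ψ ε`, the map `T` sends the closed `ε`-ball around `Tⁿv`
into itself; the limit of an orbit is a fixed point because `T` is `1`-Lipschitz.
-/

section Comparison

variable {ψ : ℝ≥0 → ℝ≥0}

theorem NNReal.le_self_of_monotone_of_lt (hm : Monotone ψ) (hlt : ∀ x, 0 < x → ψ x < x)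
    (y : ℝ≥0) : ψ y ≤ y := by
  rcases (zero_le : 0 ≤ y).eq_or_lt with rfl | hy
  · by_contra! h
    exact (hm (zero_le : 0 ≤ ψ 0)).not_gt (hlt _ h)
  · exact (hlt y hy).le

theorem NNReal.tendsto_iterate_nhds_zero (hc : Continuous ψ) (hm : Monotone ψ)
    (hlt : ∀ x, 0 < x → ψ x < x) (x : ℝ≥0) :
    Tendsto (fun n ↦ ψ^[n] x) atTop (nhds 0) := by
  have hanti : Antitone (fun n ↦ ψ^[n] x) := antitone_nat_of_succ_le fun n ↦ by
    rw [iterate_succ_apply']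
    exact le_self_of_monotone_of_lt hm hlt _
  have hlim := tendsto_atTop_ciInf hanti (OrderBot.bddBelow _)
  have hfix : IsFixedPt ψ (⨅ n, ψ^[n] x) := isFixedPt_of_tendsto_iterate hlim hc.continuousAt
  have hinf : ⨅ n, ψ^[n] x = 0 := by
    by_contra! hne
    exact (hlt _ (pos_iff_ne_zero.mpr hne)).ne hfix
  rwa [hinf] at hlim

end Comparison

section Contraction

variable {X : Type*} [PseudoMetricSpace X] {ψ : ℝ≥0 → ℝ≥0} {T : X → X}

theorem lipschitzWith_one_of_nndist_le (hle : ∀ y, ψ y ≤ y)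
    (hT : ∀ a b, nndist (T a) (T b) ≤ ψ (nndist a b)) : LipschitzWith 1 T :=
  LipschitzWith.mk_one fun a b ↦ by
    rw [dist_nndist, dist_nndist]
    exact_mod_cast (hT a b).trans (hle _)

theorem nndist_iterate_le (hm : Monotone ψ) (hT : ∀ a b, nndist (T a) (T b) ≤ ψ (nndist a b))
    (n : ℕ) (a b : X) : nndist (T^[n] a) (T^[n] b) ≤ ψ^[n] (nndist a b) := by
  induction n with
  | zero => simp
  | succ n ih =>
    simp only [iterate_succ_apply']
    exact (hT _ _).trans (hm ih)

theorem mapsTo_closedBall_of_nndist_le (hm : Monotone ψ) (hle : ∀ y, ψ y ≤ y)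
    (hT : ∀ a b, nndist (T a) (T b) ≤ ψ (nndist a b)) {x : X} {ε : ℝ≥0}
    (hx : nndist (T x) x ≤ ε - ψ ε) : MapsTo T (closedBall x ε) (closedBall x ε) := by
  intro y hy
  rw [mem_closedBall, dist_le_coe] at hy ⊢
  calc nndist (T y) x ≤ nndist (T y) (T x) + nndist (T x) x := nndist_triangle _ _ _
    _ ≤ ψ ε + (ε - ψ ε) := add_le_add ((hT y x).trans (hm hy)) hx
    _ = ε := add_tsub_cancel_of_le (hle ε)

theorem tendsto_nndist_iterate_nhds_zero (hc : Continuous ψ) (hm : Monotone ψ)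
    (hlt : ∀ x, 0 < x → ψ x < x) (hT : ∀ a b, nndist (T a) (T b) ≤ ψ (nndist a b)) (a b : X) :
    Tendsto (fun n ↦ nndist (T^[n] a) (T^[n] b)) atTop (nhds 0) :=
  tendsto_of_tendsto_of_tendsto_of_le_of_le tendsto_const_nhds
    (tendsto_iterate_nhds_zero hc hm hlt _) (fun _ ↦ zero_le) (nndist_iterate_le hm hT · a b)

theorem cauchySeq_iterate_of_nndist_le (hc : Continuous ψ) (hm : Monotone ψ)
    (hlt : ∀ x, 0 < x → ψ x < x) (hT : ∀ a b, nndist (T a) (T b) ≤ ψ (nndist a b)) (v : X) :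
    CauchySeq (fun n ↦ T^[n] v) := by
  have hle := le_self_of_monotone_of_lt hm hlt
  rw [uniformity_basis_dist_le.cauchySeq_iff']
  intro ε hε
  lift ε to ℝ≥0 using hε.le
  have hstep : Tendsto (fun n ↦ nndist (T^[n] (T v)) (T^[n] v)) atTop (nhds 0) :=
    tendsto_nndist_iterate_nhds_zero hc hm hlt hT _ _
  obtain ⟨N, hN⟩ := eventually_atTop.mp
    (hstep.eventually (ge_mem_nhds (tsub_pos_of_lt (hlt ε (mod_cast hε)))))
  have hstepN : nndist (T (T^[N] v)) (T^[N] v) ≤ ε - ψ ε := by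
    rw [← iterate_succ_apply' T, iterate_succ_apply]
    exact hN N le_rfl
  have hball := (mapsTo_closedBall_of_nndist_le hm hle hT hstepN).iterate
  refine ⟨N, fun n hn ↦ ?_⟩
  obtain ⟨m, rfl⟩ := Nat.exists_eq_add_of_le' hn
  rw [iterate_add_apply]
  exact hball m (mem_closedBall_self ε.2)

end Contraction

/-- Matkowski's generalisation of the Banach contraction principle:
if `ψ : [0,∞) → [0,∞)` is continuous, increasing and `ψ x < x` for `x > 0`,
and `T : Z → Z` satisfies `dist (T v₁) (T v₂) ≤ ψ (dist v₁ v₂)` on a complete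
metric space `Z`, then `T` has a unique fixed point `v*` and the iterates
`T⁽ⁿ⁾ v` converge to `v*` for every `v ∈ Z`. -/
theorem matkowski_fixed_point {Z : Type*} [MetricSpace Z] [CompleteSpace Z] [Nonempty Z]
    (ψ : ℝ≥0 → ℝ≥0) (hψc : Continuous ψ) (hψm : Monotone ψ)
    (hψlt : ∀ x : ℝ≥0, 0 < x → ψ x < x)
    (T : Z → Z)
    (hT : ∀ v₁ v₂ : Z, nndist (T v₁) (T v₂) ≤ ψ (nndist v₁ v₂)) :
    ∃ vstar : Z, T vstar = vstar ∧ (∀ w : Z, T w = w → w = vstar) ∧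
      ∀ v : Z, Tendsto (fun n : ℕ => T^[n] v) atTop (nhds vstar) := by
  obtain ⟨v₀⟩ := ‹Nonempty Z›
  obtain ⟨vstar, hlim⟩ :=
    cauchySeq_tendsto_of_complete (cauchySeq_iterate_of_nndist_le hψc hψm hψlt hT v₀)
  have hfix : IsFixedPt T vstar := isFixedPt_of_tendsto_iterate hlim
    (lipschitzWith_one_of_nndist_le (le_self_of_monotone_of_lt hψm hψlt) hT).continuous.continuousAt
  have hconv : ∀ v, Tendsto (fun n ↦ T^[n] v) atTop (nhds vstar) := fun v ↦ by
    have h := tendsto_nndist_iterate_nhds_zero hψc hψm hψlt hT v vstar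
    simp only [iterate_fixed hfix] at h
    rw [tendsto_iff_dist_tendsto_zero]
    simpa only [← dist_nndist, NNReal.coe_zero] using NNReal.tendsto_coe.mpr h
  refine ⟨vstar, hfix, fun w hw ↦ ?_, hconv⟩
  simpa only [iterate_fixed hw, tendsto_const_nhds_iff] using hconv w
end

section
/- Let ψ : [0,∞) → [0,∞) be increasing (monotone non-decreasing), subadditive (ψ(y+z) ≤ ψ(y) + ψ(z) for all y, z ≥ 0), and satisfy ψ(y) < y for all y > 0. For z > 0 define the sequence ψ₁(z) = z and ψ_{m+1}(z) = z + ψ(ψ_m(z)), i.e. ψ_m(z) = z + ψ(z + ψ(z + ⋯ + ψ(z + ψ(z))⋯)) with z appearing m times. Then the sequence (ψ_m(z))_{m≥1} is increasing and L(z) := lim_{m→∞} ψ_m(z) = sup_{m≥1} ψ_m(z) is finite. -/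
open Filter

/-- For `ψ : [0,∞) → [0,∞)` increasing, subadditive with `ψ y < y` for `y > 0`,
the sequence `ψ₁(z) = z`, `ψ_{m+1}(z) = z + ψ(ψ_m(z))` is increasing and its limit
`L(z)` exists and equals its (finite) supremum. -/
theorem psi_m_increasing_and_bounded (ψ : ℝ → ℝ)
    (hψm : MonotoneOn ψ (Set.Ici 0)) (hψ0 : ∀ x : ℝ, 0 ≤ x → 0 ≤ ψ x)
    (hψsub : ∀ y : ℝ, 0 ≤ y → ∀ z : ℝ, 0 ≤ z → ψ (y + z) ≤ ψ y + ψ z)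
    (hψlt : ∀ y : ℝ, 0 < y → ψ y < y)
    (z : ℝ) (hz : 0 < z)
    (Φ : ℕ → ℝ) (hΦ0 : Φ 0 = z) (hΦsucc : ∀ m : ℕ, Φ (m + 1) = z + ψ (Φ m)) :
    Monotone Φ ∧ BddAbove (Set.range Φ) ∧ Tendsto Φ atTop (nhds (⨆ m, Φ m)) := by
  -- every term is at least z
  have hge : ∀ m, z ≤ Φ m := by
    intro m
    induction m with
    | zero => rw [hΦ0]
    | succ k ih =>
      rw [hΦsucc]
      have := hψ0 (Φ k) (le_trans hz.le ih)
      linarith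
  have hΦnn : ∀ m, (0:ℝ) ≤ Φ m := fun m => le_trans hz.le (hge m)
  -- monotone
  have hstep : ∀ m, Φ m ≤ Φ (m + 1) := by
    intro m
    induction m with
    | zero =>
      rw [hΦ0, hΦsucc, hΦ0]
      have := hψ0 z hz.le
      linarith
    | succ k ih =>
      have h := hψm (Set.mem_Ici.mpr (hΦnn k)) (Set.mem_Ici.mpr (hΦnn (k+1))) ih
      rw [hΦsucc (k+1), hΦsucc k]
      rw [hΦsucc k] at h
      linarith
  have hmono : Monotone Φ := monotone_nat_of_le_succ hstep
  -- subadditivity iterated: ψ((k+1)z) ≤ (k+1) ψ z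
  have hiter : ∀ k : ℕ, ψ ((k + 1 : ℕ) * z) ≤ (k + 1 : ℕ) * ψ z := by
    intro k
    induction k with
    | zero => simp
    | succ n ih =>
      have h1 : ((n + 1 + 1 : ℕ) : ℝ) * z = (n + 1 : ℕ) * z + z := by
        push_cast; ring
      have hnz : (0:ℝ) ≤ (n + 1 : ℕ) * z := by positivity
      have := hψsub ((n + 1 : ℕ) * z) hnz z hz.le
      rw [h1]
      calc ψ ((n + 1 : ℕ) * z + z) ≤ ψ ((n + 1 : ℕ) * z) + ψ z := this
        _ ≤ (n + 1 : ℕ) * ψ z + ψ z := by linarith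
        _ = (n + 1 + 1 : ℕ) * ψ z := by push_cast; ring
  -- pick n with (n+1)*(z - ψ z) ≥ z
  have hε : 0 < z - ψ z := by have := hψlt z hz; linarith
  obtain ⟨n, hn⟩ := exists_nat_ge (z / (z - ψ z))
  have hnε : z ≤ ((n:ℝ) + 1) * (z - ψ z) := by
    have h1 : z ≤ (n:ℝ) * (z - ψ z) := by
      rw [div_le_iff₀ hε] at hn; linarith
    nlinarith
  set M : ℝ := ((n:ℝ) + 1) * z with hM
  have hMnn : (0:ℝ) ≤ M := by positivity
  have hψM : ψ M ≤ ((n:ℝ) + 1) * ψ z := by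
    have := hiter n
    push_cast at this
    simpa [hM] using this
  -- bound Φ m ≤ M
  have hbd : ∀ m, Φ m ≤ M := by
    intro m
    induction m with
    | zero =>
      rw [hΦ0, hM]
      nlinarith [Nat.cast_nonneg (α := ℝ) n]
    | succ k ih =>
      rw [hΦsucc]
      have h2 : ψ (Φ k) ≤ ψ M :=
        hψm (Set.mem_Ici.mpr (hΦnn k)) (Set.mem_Ici.mpr hMnn) ih
      have : z + ψ M ≤ M := by rw [hM]; nlinarith
      linarith
  have hbdd : BddAbove (Set.range Φ) := ⟨M, by rintro x ⟨m, rfl⟩; exact hbd m⟩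
  exact ⟨hmono, hbdd, tendsto_atTop_ciSup hmono hbdd⟩
end

section
/- Fix ε ∈ (0,1) and define γ : [0,∞) → [0,∞) by γ(x) = (1−ε)x + ε|sin x|. Then: (i) γ is subadditive, i.e. γ(y+z) ≤ γ(y) + γ(z) for all y, z ≥ 0; (ii) γ(z) < z for all z > 0; and (iii) the function z ↦ γ(z)/z is not non-increasing on (0,∞), i.e. there exist 0 < z₁ < z₂ with γ(z₁)/z₁ < γ(z₂)/z₂. -/
lemma abs_sin_subadd (y z : ℝ) :
    |Real.sin (y + z)| ≤ |Real.sin y| + |Real.sin z| := by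
  rw [Real.sin_add]
  calc |Real.sin y * Real.cos z + Real.cos y * Real.sin z|
      ≤ |Real.sin y * Real.cos z| + |Real.cos y * Real.sin z| := abs_add_le _ _
    _ ≤ |Real.sin y| + |Real.sin z| := by
        rw [abs_mul, abs_mul]
        nlinarith [Real.abs_cos_le_one z, Real.abs_cos_le_one y,
          abs_nonneg (Real.sin y), abs_nonneg (Real.sin z),
          abs_nonneg (Real.cos y), abs_nonneg (Real.cos z)]

lemma abs_sin_lt (z : ℝ) (hz : 0 < z) : |Real.sin z| < z := by
  rcases lt_or_ge z (Real.pi / 2) with h | h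
  · have hpos : 0 < Real.sin z := Real.sin_pos_of_pos_of_lt_pi hz
      (h.trans_le (by linarith [Real.pi_pos]))
    rw [abs_of_pos hpos]
    exact Real.sin_lt hz
  · calc |Real.sin z| ≤ 1 := Real.abs_sin_le_one z
      _ < Real.pi / 2 := by linarith [Real.pi_gt_three]
      _ ≤ z := h

/-- For `ε ∈ (0,1)` and `γ x = (1−ε)x + ε|sin x|`: `γ` is subadditive on `[0,∞)`,
`γ z < z` for `z > 0`, and `z ↦ γ(z)/z` is not non-increasing on `(0,∞)`. -/
theorem sin_example_subadditive_not_ratio_monotone (ε : ℝ) (hε0 : 0 < ε) (hε1 : ε < 1) :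
    (∀ y : ℝ, 0 ≤ y → ∀ z : ℝ, 0 ≤ z →
      (1 - ε) * (y + z) + ε * |Real.sin (y + z)| ≤
        ((1 - ε) * y + ε * |Real.sin y|) + ((1 - ε) * z + ε * |Real.sin z|)) ∧
    (∀ z : ℝ, 0 < z → (1 - ε) * z + ε * |Real.sin z| < z) ∧
    (∃ z₁ z₂ : ℝ, 0 < z₁ ∧ z₁ < z₂ ∧
      ((1 - ε) * z₁ + ε * |Real.sin z₁|) / z₁ < ((1 - ε) * z₂ + ε * |Real.sin z₂|) / z₂) := by
  refine ⟨?_, ?_, ?_⟩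
  · intro y _ z _
    have h := abs_sin_subadd y z
    nlinarith
  · intro z hz
    have h := abs_sin_lt z hz
    nlinarith
  · refine ⟨Real.pi, 5 * Real.pi / 2, Real.pi_pos, by linarith [Real.pi_pos], ?_⟩
    have h1 : Real.sin Real.pi = 0 := Real.sin_pi
    have h2 : Real.sin (5 * Real.pi / 2) = 1 := by
      have : (5 : ℝ) * Real.pi / 2 = Real.pi / 2 + 2 * Real.pi := by ring
      rw [this, Real.sin_add_two_pi, Real.sin_pi_div_two]
    rw [h1, h2]
    have hπ := Real.pi_pos
    rw [div_lt_div_iff₀ hπ (by linarith)]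
    simp only [abs_zero, abs_one]
    nlinarith
end

section
/- Let X and A be Borel spaces, D a nonempty Borel subset of X×A with nonempty x-sections A(x), q a Borel measurable transition probability kernel from X×A to X, ω : X → [1,∞) Borel measurable, u : D → ℝ Borel measurable with |u(x,a)| ≤ zω(x) for all (x,a) ∈ D and some z > 0, and let δ : ℝ → ℝ and γ : [0,∞) → [0,∞) satisfy: γ is increasing with γ(z) < z for z > 0; |δ(z₁) − δ(z₂)| ≤ γ(|z₁ − z₂|) for all z₁, z₂ ∈ ℝ; δ is increasing with δ(0) = 0; γ is subadditive and γ(ω(x)y) ≤ ω(x)γ(y) for all x ∈ X, y > 0; and ∫_X ω(y) q(dy|x,a) ≤ αω(x) on D for some α > 0. Define Tv(x) = sup_{a∈A(x)} [u(x,a) + ∫_X δ(v(y)) q(dy|x,a)]. Then for all Borel measurable v₁, v₂ : X → ℝ with ‖v₁‖_ω < ∞ and ‖v₂‖_ω < ∞ one has sup_{x∈X} |Tv₁(x) − Tv₂(x)|/ω(x) ≤ αγ(‖v₁ − v₂‖_ω), where ‖v‖_ω := sup_{x∈X} |v(x)|/ω(x). -/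
/-! For each `a ∈ A(x)` the quantities maximised by `T v₁ x` and `T v₂ x` differ by at most
`∫ |δ ∘ v₁ - δ ∘ v₂| dq(·|x,a) ≤ ∫ γ(K ω) dq ≤ γ(K) ∫ ω dq ≤ α γ(K) ω(x)` with `K = ‖v₁ - v₂‖_ω`,
using `|v₁ - v₂| ≤ K ω`, monotonicity of `γ` and `γ(ω(y) K) ≤ ω(y) γ(K)`. Suprema over `a` of
uniformly close functions are equally close, which gives `|T v₁ - T v₂| ≤ α γ(K) ω`. -/

open MeasureTheory ProbabilityTheory

/-- The Bellman operator `Tv(x) = sup_{a ∈ A(x)} [u(x,a) + ∫ δ(v(y)) q(dy|x,a)]`. -/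
noncomputable def bellmanOp {X A : Type*} [MeasurableSpace X] [MeasurableSpace A]
    (q : Kernel (X × A) X) (D : Set (X × A)) (u : X × A → ℝ) (δ : ℝ → ℝ)
    (v : X → ℝ) (x : X) : ℝ :=
  sSup ((fun a => u (x, a) + ∫ y, δ (v y) ∂(q (x, a))) '' {a : A | (x, a) ∈ D})

/-- No boundedness is needed: if `f` is unbounded above on `s` then so is `g`, and both suprema
are `sSup ∅`. -/
theorem Real.abs_sSup_image_sub_sSup_image_le {ι : Type*} {s : Set ι} (hs : s.Nonempty)
    {f g : ι → ℝ} {ε : ℝ} (h : ∀ i ∈ s, |f i - g i| ≤ ε) :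
    |sSup (f '' s) - sSup (g '' s)| ≤ ε := by
  have bddAbove_of {f g : ι → ℝ} (h : ∀ i ∈ s, |f i - g i| ≤ ε) :
      BddAbove (g '' s) → BddAbove (f '' s) := by
    rintro ⟨b, hb⟩
    refine ⟨b + ε, ?_⟩
    rintro _ ⟨i, hi, rfl⟩
    linarith [(abs_le.1 (h i hi)).2, hb ⟨i, hi, rfl⟩]
  have sSup_sub_le {f g : ι → ℝ} (h : ∀ i ∈ s, |f i - g i| ≤ ε) (hg : BddAbove (g '' s)) :
      sSup (f '' s) - sSup (g '' s) ≤ ε := by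
    refine sub_le_iff_le_add.2 (csSup_le (hs.image f) ?_)
    rintro _ ⟨i, hi, rfl⟩
    linarith [(abs_le.1 (h i hi)).2, le_csSup hg ⟨i, hi, rfl⟩]
  have h' : ∀ i ∈ s, |g i - f i| ≤ ε := fun i hi => abs_sub_comm (f i) (g i) ▸ h i hi
  by_cases hf : BddAbove (f '' s)
  · exact abs_sub_le_iff.2 ⟨sSup_sub_le h (bddAbove_of h' hf), sSup_sub_le h' hf⟩
  · rw [csSup_of_not_bddAbove hf, csSup_of_not_bddAbove (mt (bddAbove_of h) hf), sub_self,
      abs_zero]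
    obtain ⟨i, hi⟩ := hs
    exact (abs_nonneg _).trans (h i hi)

/-- No integrability of `f₁, f₂` is needed: if one is not integrable neither is the other, and
both integrals take the junk value `0`. -/
theorem MeasureTheory.abs_integral_sub_integral_le {α : Type*} [MeasurableSpace α]
    {μ : Measure α} {f₁ f₂ g : α → ℝ} (hf₁ : AEStronglyMeasurable f₁ μ)
    (hf₂ : AEStronglyMeasurable f₂ μ) (hg : Integrable g μ) (h : ∀ x, |f₁ x - f₂ x| ≤ g x) :
    |∫ x, f₁ x ∂μ - ∫ x, f₂ x ∂μ| ≤ ∫ x, g x ∂μ := by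
  have hdiff : Integrable (f₁ - f₂) μ :=
    hg.mono' (hf₁.sub hf₂) (Filter.Eventually.of_forall h)
  by_cases hi₁ : Integrable f₁ μ
  · have hi₂ : Integrable f₂ μ := by simpa using hi₁.sub hdiff
    rw [← integral_sub hi₁ hi₂]
    exact norm_integral_le_of_norm_le (f := fun x => f₁ x - f₂ x) hg (.of_forall h)
  · have hi₂ : ¬Integrable f₂ μ := fun hi₂ => hi₁ (by simpa using hi₂.add hdiff)
    rw [integral_undef hi₁, integral_undef hi₂, sub_self, abs_zero]
    exact integral_nonneg fun x => (abs_nonneg _).trans (h x)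

theorem map_abs_le_mul_of_abs_le {γ : ℝ → ℝ} (hγm : MonotoneOn γ (Set.Ici 0)) (hγ0 : 0 ≤ γ 0)
    {w : ℝ} (hw : 1 ≤ w) (hγw : ∀ y, 0 < y → γ (w * y) ≤ w * γ y) {t K : ℝ} (hK : 0 ≤ K)
    (ht : |t| ≤ K * w) : γ |t| ≤ γ K * w := by
  calc γ |t| ≤ γ (w * K) :=
        hγm (abs_nonneg t) (mul_nonneg (zero_le_one.trans hw) hK) (mul_comm K w ▸ ht)
    _ ≤ w * γ K := by
        rcases hK.eq_or_lt with rfl | hK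
        · simpa only [mul_zero] using le_mul_of_one_le_left hγ0 hw
        · exact hγw K hK
    _ = γ K * w := mul_comm _ _

theorem abs_bellmanOp_sub_le {X A : Type*} [MeasurableSpace X] [MeasurableSpace A]
    {q : Kernel (X × A) X} {D : Set (X × A)} {u : X × A → ℝ} {δ : ℝ → ℝ} {v₁ v₂ ω : X → ℝ}
    {α C : ℝ} {x : X} (hx : ∃ a, (x, a) ∈ D) (hδ : Measurable δ) (hv₁ : Measurable v₁)
    (hv₂ : Measurable v₂) (hC : 0 ≤ C) (hδv : ∀ y, |δ (v₁ y) - δ (v₂ y)| ≤ C * ω y)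
    (hωq : ∀ a, (x, a) ∈ D → Integrable ω (q (x, a)) ∧ ∫ y, ω y ∂(q (x, a)) ≤ α * ω x) :
    |bellmanOp q D u δ v₁ x - bellmanOp q D u δ v₂ x| ≤ C * (α * ω x) := by
  refine Real.abs_sSup_image_sub_sSup_image_le hx fun a ha => ?_
  obtain ⟨hω, hωα⟩ := hωq a ha
  calc |u (x, a) + ∫ y, δ (v₁ y) ∂(q (x, a)) - (u (x, a) + ∫ y, δ (v₂ y) ∂(q (x, a)))|
      = |∫ y, δ (v₁ y) ∂(q (x, a)) - ∫ y, δ (v₂ y) ∂(q (x, a))| := by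
        rw [add_sub_add_left_eq_sub]
    _ ≤ ∫ y, C * ω y ∂(q (x, a)) :=
        abs_integral_sub_integral_le (hδ.comp hv₁).aestronglyMeasurable
          (hδ.comp hv₂).aestronglyMeasurable (hω.const_mul C) hδv
    _ = C * ∫ y, ω y ∂(q (x, a)) := integral_const_mul _ _
    _ ≤ C * (α * ω x) := mul_le_mul_of_nonneg_left hωα hC

theorem bellman_operator_contraction_estimate_general
    {X A : Type*}
    [MeasurableSpace X] [Nonempty X]
    [MeasurableSpace A]
    (D : Set (X × A)) (hDne : ∀ x : X, ∃ a : A, (x, a) ∈ D)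
    (q : Kernel (X × A) X)
    (ω : X → ℝ) (hω1 : ∀ x, 1 ≤ ω x)
    (u : X × A → ℝ)
    (δ : ℝ → ℝ) (γ : ℝ → ℝ)
    (hγm : MonotoneOn γ (Set.Ici 0)) (hγ0 : ∀ s : ℝ, 0 ≤ s → 0 ≤ γ s)
    (hδγ : ∀ z₁ z₂ : ℝ, |δ z₁ - δ z₂| ≤ γ |z₁ - z₂|)
    (hδm : Monotone δ)
    (hγω : ∀ x : X, ∀ y : ℝ, 0 < y → γ (ω x * y) ≤ ω x * γ y)
    (α : ℝ)
    (hωq : ∀ p ∈ D, Integrable ω (q p) ∧ ∫ y, ω y ∂(q p) ≤ α * ω p.1)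
    (v₁ v₂ : X → ℝ) (hv₁ : Measurable v₁) (hv₂ : Measurable v₂)
    (hv₁b : ∃ c : ℝ, ∀ x, |v₁ x| ≤ c * ω x) (hv₂b : ∃ c : ℝ, ∀ x, |v₂ x| ≤ c * ω x) :
    ⨆ x : X, |bellmanOp q D u δ v₁ x - bellmanOp q D u δ v₂ x| / ω x ≤
      α * γ (⨆ x : X, |v₁ x - v₂ x| / ω x) := by
  have hω0 (x : X) : 0 < ω x := one_pos.trans_le (hω1 x)
  obtain ⟨c₁, hc₁⟩ := hv₁b
  obtain ⟨c₂, hc₂⟩ := hv₂b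
  set K := ⨆ x : X, |v₁ x - v₂ x| / ω x
  have hbdd : BddAbove (Set.range fun x => |v₁ x - v₂ x| / ω x) := by
    refine ⟨c₁ + c₂, ?_⟩
    rintro _ ⟨x, rfl⟩
    rw [div_le_iff₀ (hω0 x)]
    linarith [abs_sub (v₁ x) (v₂ x), hc₁ x, hc₂ x]
  have hK0 : 0 ≤ K := Real.iSup_nonneg fun x => div_nonneg (abs_nonneg _) (hω0 x).le
  have hδv (y : X) : |δ (v₁ y) - δ (v₂ y)| ≤ γ K * ω y :=
    (hδγ _ _).trans <| map_abs_le_mul_of_abs_le hγm (hγ0 0 le_rfl) (hω1 y) (hγω y) hK0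
      ((div_le_iff₀ (hω0 y)).1 (le_ciSup hbdd y))
  refine ciSup_le fun x => (div_le_iff₀ (hω0 x)).2 ?_
  calc |bellmanOp q D u δ v₁ x - bellmanOp q D u δ v₂ x| ≤ γ K * (α * ω x) :=
        abs_bellmanOp_sub_le (hDne x) hδm.measurable hv₁ hv₂ (hγ0 K hK0) hδv
          fun a ha => hωq (x, a) ha
    _ = α * γ K * ω x := by ring

/-- Contraction estimate for the Bellman operator in the weighted supremum norm:
`sup_x |Tv₁ x − Tv₂ x|/ω x ≤ α γ(‖v₁ − v₂‖_ω)`. -/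
theorem bellman_operator_contraction_estimate
    {X A : Type*}
    [MetricSpace X] [SecondCountableTopology X] [MeasurableSpace X] [BorelSpace X] [Nonempty X]
    [MetricSpace A] [SecondCountableTopology A] [MeasurableSpace A] [BorelSpace A] [Nonempty A]
    (D : Set (X × A)) (hD : MeasurableSet D) (hDne : ∀ x : X, ∃ a : A, (x, a) ∈ D)
    (q : Kernel (X × A) X) [IsMarkovKernel q]
    (ω : X → ℝ) (hωm : Measurable ω) (hω1 : ∀ x, 1 ≤ ω x)
    (u : X × A → ℝ) (hu : Measurable u)
    (z : ℝ) (hz : 0 < z) (huω : ∀ p ∈ D, |u p| ≤ z * ω p.1)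
    (δ : ℝ → ℝ) (γ : ℝ → ℝ)
    (hγm : MonotoneOn γ (Set.Ici 0)) (hγ0 : ∀ s : ℝ, 0 ≤ s → 0 ≤ γ s)
    (hγlt : ∀ s : ℝ, 0 < s → γ s < s)
    (hδγ : ∀ z₁ z₂ : ℝ, |δ z₁ - δ z₂| ≤ γ |z₁ - z₂|)
    (hδm : Monotone δ) (hδ0 : δ 0 = 0)
    (hγsub : ∀ y : ℝ, 0 ≤ y → ∀ s : ℝ, 0 ≤ s → γ (y + s) ≤ γ y + γ s)
    (hγω : ∀ x : X, ∀ y : ℝ, 0 < y → γ (ω x * y) ≤ ω x * γ y)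
    (α : ℝ) (hα : 0 < α)
    (hωq : ∀ p ∈ D, Integrable ω (q p) ∧ ∫ y, ω y ∂(q p) ≤ α * ω p.1)
    (v₁ v₂ : X → ℝ) (hv₁ : Measurable v₁) (hv₂ : Measurable v₂)
    (hv₁b : ∃ c : ℝ, ∀ x, |v₁ x| ≤ c * ω x) (hv₂b : ∃ c : ℝ, ∀ x, |v₂ x| ≤ c * ω x) :
    ⨆ x : X, |bellmanOp q D u δ v₁ x - bellmanOp q D u δ v₂ x| / ω x ≤
      α * γ (⨆ x : X, |v₁ x - v₂ x| / ω x) :=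
  bellman_operator_contraction_estimate_general D hDne q ω hω1 u δ γ hγm hγ0 hδγ hδm hγω α hωq v₁ v₂
    hv₁ hv₂ hv₁b hv₂b
end

section
/- Let X and A be Borel spaces, D a nonempty Borel subset of X×A with nonempty x-sections A(x), q a Borel measurable transition probability kernel from X×A to X, ω : X → [1,∞) Borel measurable, u : D → ℝ Borel measurable with |u(x,a)| ≤ zω(x) on D for some z > 0, and let δ : ℝ → ℝ and γ : [0,∞) → [0,∞) satisfy: γ is increasing with γ(s) < s for s > 0; |δ(z₁) − δ(z₂)| ≤ γ(|z₁ − z₂|) for all z₁, z₂ ∈ ℝ; δ is increasing with δ(0) = 0; γ is subadditive and γ(ω(x)y) ≤ ω(x)γ(y) for x ∈ X, y > 0; ∫_X ω(y) q(dy|x,a) ≤ αω(x) on D, with either α ≤ 1 or (α > 1 and αγ(s) < s for all s > 0). Let f : X → A be Borel measurable with f(x) ∈ A(x) for all x, and define T_f v(x) = u(x,f(x)) + ∫_X δ(v(y)) q(dy|x,f(x)). Then T_f maps the set M of Borel measurable v : X → ℝ with ‖v‖_ω := sup_x |v(x)|/ω(x) < ∞ into itself, there exists a unique v_f ∈ M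 with T_f v_f = v_f, and ‖T_f^{(n)} w − v_f‖_ω → 0 as n → ∞ for every w ∈ M. -/
/-!
Dividing by `ω` identifies the `ω`-bounded measurable functions, normed by `‖·‖_ω`, with the
measurable elements of `ℓ^∞(X)`, a closed and hence complete subspace. There `T_f` satisfies
`‖T_f v - T_f w‖_ω ≤ φ ‖v - w‖_ω` with `φ = α γ`, because `|δ a - δ b| ≤ γ |a - b|`,
`γ (ω y s) ≤ ω y γ s` and `∫ ω dq(·|x, f x) ≤ α ω x`. The comparison function `φ` is monotone
with `φ s < s`, and its subadditivity forces `φ^[n] t → 0`; by Matkowski's fixed point theorem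
the iterates of every starting point then converge to the unique fixed point.
-/

open MeasureTheory ProbabilityTheory Filter

/-- The operator `T_f v (x) = u(x, f x) + ∫ δ(v(y)) q(dy | x, f x)` associated with a
stationary policy `f`. -/
noncomputable def policyOp {X A : Type*} [MeasurableSpace X] [MeasurableSpace A]
    (q : Kernel (X × A) X) (u : X × A → ℝ) (δ : ℝ → ℝ) (f : X → A)
    (v : X → ℝ) (x : X) : ℝ :=
  u (x, f x) + ∫ y, δ (v y) ∂(q (x, f x))

open Set
open scoped NNReal ENNReal Topology

section Comparison

variable {φ : ℝ≥0 → ℝ≥0}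

theorem eq_zero_of_le_apply_of_tendsto_iterate (hφ : Monotone φ)
    (hφiter : ∀ t, Tendsto (fun n => φ^[n] t) atTop (𝓝 0)) {t : ℝ≥0} (ht : t ≤ φ t) : t = 0 :=
  nonpos_iff_eq_zero.mp <| ge_of_tendsto' (hφiter t) fun n =>
    hφ.monotone_iterate_of_le_map ht (Nat.zero_le n)

theorem apply_le_self_of_tendsto_iterate (hφ : Monotone φ)
    (hφiter : ∀ t, Tendsto (fun n => φ^[n] t) atTop (𝓝 0)) (t : ℝ≥0) : φ t ≤ t := by
  by_contra! h
  have := eq_zero_of_le_apply_of_tendsto_iterate hφ hφiter (hφ h.le)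
  simp [this] at h

theorem apply_lt_self_of_tendsto_iterate (hφ : Monotone φ)
    (hφiter : ∀ t, Tendsto (fun n => φ^[n] t) atTop (𝓝 0)) {t : ℝ≥0} (ht : 0 < t) : φ t < t :=
  lt_of_not_ge fun h => ht.ne' (eq_zero_of_le_apply_of_tendsto_iterate hφ hφiter h)

theorem tendsto_iterate_nhds_zero_of_subadditive (hφ : Monotone φ)
    (hlt : ∀ t, 0 < t → φ t < t) (hsub : ∀ a b, φ (a + b) ≤ φ a + φ b) (t : ℝ≥0) :
    Tendsto (fun n => φ^[n] t) atTop (𝓝 0) := by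
  have hle : ∀ s, φ s ≤ s := by
    intro s
    rcases eq_zero_or_pos s with rfl | hs
    · exact le_of_forall_gt_imp_ge_of_dense fun ε hε => (hφ bot_le).trans (hlt ε hε).le
    · exact (hlt s hs).le
  have hanti : Antitone fun n => φ^[n] t := hφ.antitone_iterate_of_map_le (hle t)
  set L := ⨅ n, φ^[n] t
  have hL : Tendsto (fun n => φ^[n] t) atTop (𝓝 L) :=
    tendsto_atTop_ciInf hanti (OrderBot.bddBelow _)
  obtain hL0 | hL0 := eq_zero_or_pos L
  · rwa [hL0] at hL
  -- subadditivity makes `φ` upper semicontinuous from the right at `L`, so `L ≤ φ L`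
  have hstep : ∀ n, φ^[n + 1] t ≤ φ L + (φ^[n] t - L) := fun n => by
    have hLn : L ≤ φ^[n] t := ciInf_le (OrderBot.bddBelow _) n
    calc φ^[n + 1] t = φ (L + (φ^[n] t - L)) := by
          rw [Function.iterate_succ_apply', add_tsub_cancel_of_le hLn]
      _ ≤ φ L + (φ^[n] t - L) := (hsub _ _).trans (add_le_add le_rfl (hle _))
  have hlim : Tendsto (fun n => φ L + (φ^[n] t - L)) atTop (𝓝 (φ L)) := by
    simpa using tendsto_const_nhds.add (hL.sub_const L)
  exact absurd (le_of_tendsto_of_tendsto' ((tendsto_add_atTop_iff_nat 1).2 hL) hlim hstep)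
    (not_le.2 (hlt L hL0))

end Comparison

section Matkowski

variable {E : Type*} [MetricSpace E] {T : E → E} {φ : ℝ≥0 → ℝ≥0}

theorem nndist_iterate_le_iterate (hφ : Monotone φ)
    (hT : ∀ x y, nndist (T x) (T y) ≤ φ (nndist x y)) (x y : E) (n : ℕ) :
    nndist (T^[n] x) (T^[n] y) ≤ φ^[n] (nndist x y) := by
  induction n with
  | zero => rfl
  | succ n ih =>
    rw [Function.iterate_succ_apply', Function.iterate_succ_apply', Function.iterate_succ_apply']
    exact (hT _ _).trans (hφ ih)

theorem cauchySeq_iterate_of_nndist_le_s9 (hφ : Monotone φ)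
    (hφiter : ∀ t, Tendsto (fun n => φ^[n] t) atTop (𝓝 0))
    (hT : ∀ x y, nndist (T x) (T y) ≤ φ (nndist x y)) (x : E) :
    CauchySeq fun n => T^[n] x := by
  have hstep : Tendsto (fun n => nndist (T^[n + 1] x) (T^[n] x)) atTop (𝓝 0) := by
    refine tendsto_of_tendsto_of_tendsto_of_le_of_le tendsto_const_nhds (hφiter (nndist (T x) x))
      (fun _ => bot_le) fun n => ?_
    simpa only [Function.iterate_succ_apply] using nndist_iterate_le_iterate hφ hT (T x) x n
  refine Metric.cauchySeq_iff'.2 fun ε hε => ?_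
  set r : ℝ≥0 := ⟨ε / 2, by positivity⟩
  have hr : 0 < r := NNReal.coe_pos.1 (half_pos hε)
  obtain ⟨N, hN⟩ := (hstep.eventually (gt_mem_nhds (tsub_pos_of_lt
    (apply_lt_self_of_tendsto_iterate hφ hφiter hr)))).exists_forall_of_atTop
  -- the ball of radius `r` around `T^[N] x` is invariant along the orbit
  have hball : ∀ m, N ≤ m → nndist (T^[m] x) (T^[N] x) ≤ r := by
    intro m hm
    induction m, hm using Nat.le_induction with
    | base => simp
    | succ m _ ih =>
      calc nndist (T^[m + 1] x) (T^[N] x)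
          ≤ nndist (T^[m + 1] x) (T^[N + 1] x) + nndist (T^[N + 1] x) (T^[N] x) :=
            nndist_triangle _ _ _
        _ ≤ φ r + (r - φ r) := by
            gcongr
            · simp only [Function.iterate_succ_apply']
              exact (hT _ _).trans (hφ ih)
            · exact (hN N le_rfl).le
        _ = r := add_tsub_cancel_of_le (apply_le_self_of_tendsto_iterate hφ hφiter r)
  refine ⟨N, fun m hm => ?_⟩
  have : (nndist (T^[m] x) (T^[N] x) : ℝ) ≤ ε / 2 := hball m hm
  rw [dist_nndist]
  linarith

/-- Matkowski's fixed point theorem. -/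
theorem exists_isFixedPt_tendsto_iterate_of_nndist_le [CompleteSpace E] [Nonempty E]
    (hφ : Monotone φ) (hφiter : ∀ t, Tendsto (fun n => φ^[n] t) atTop (𝓝 0))
    (hT : ∀ x y, nndist (T x) (T y) ≤ φ (nndist x y)) :
    ∃ p, Function.IsFixedPt T p ∧ ∀ x, Tendsto (fun n => T^[n] x) atTop (𝓝 p) := by
  obtain ⟨x₀⟩ := ‹Nonempty E›
  obtain ⟨p, hp⟩ := cauchySeq_tendsto_of_complete (cauchySeq_iterate_of_nndist_le_s9 hφ hφiter hT x₀)
  have hTcont : Continuous T := (LipschitzWith.mk_one fun x y => by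
    simpa only [dist_nndist, NNReal.coe_le_coe] using
      (hT x y).trans (apply_le_self_of_tendsto_iterate hφ hφiter _)).continuous
  refine ⟨p, ?_, fun x => hp.congr_dist ?_⟩
  · refine tendsto_nhds_unique ?_ ((tendsto_add_atTop_iff_nat 1).2 hp)
    simpa only [Function.comp_def, Function.iterate_succ_apply'] using (hTcont.tendsto p).comp hp
  · refine squeeze_zero (fun _ => dist_nonneg) (fun n => ?_)
      (by simpa using NNReal.tendsto_coe.2 (hφiter (nndist x₀ x)))
    rw [dist_nndist]
    exact_mod_cast nndist_iterate_le_iterate hφ hT x₀ x n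

end Matkowski

theorem lp.isClosed_setOf_measurable {ι E : Type*} [MeasurableSpace ι] [NormedAddCommGroup E]
    [MeasurableSpace E] [BorelSpace E] {p : ℝ≥0∞} [Fact (1 ≤ p)] :
    IsClosed {f : lp (fun _ : ι => E) p | Measurable f} := by
  refine isSeqClosed_iff_isClosed.mp fun f g hf hfg => ?_
  have hp : p ≠ 0 := (zero_lt_one.trans_le Fact.out).ne'
  refine measurable_of_tendsto_metrizable hf (tendsto_pi_nhds.2 fun i => ?_)
  refine tendsto_iff_norm_sub_tendsto_zero.2 (squeeze_zero (fun _ => norm_nonneg _)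
    (fun n => ?_) (tendsto_iff_norm_sub_tendsto_zero.1 hfg))
  simpa only [lp.coeFn_sub, Pi.sub_apply] using lp.norm_apply_le_norm hp (f n - g) i

section Weighted

variable {X : Type*} [MeasurableSpace X] {ω : X → ℝ}

/-- The space `M` of the paper: measurable `v` with `‖v‖_ω = sup_x |v x| / ω x < ∞`. -/
def boundedMeasurable (ω : X → ℝ) : Set (X → ℝ) :=
  {v | Measurable v ∧ ∃ c, ∀ x, |v x| ≤ c * ω x}

theorem exists_nonneg_bound_of_mem_boundedMeasurable (hω : ∀ x, 0 ≤ ω x) {v : X → ℝ}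
    (hv : v ∈ boundedMeasurable ω) : ∃ c, 0 ≤ c ∧ ∀ x, |v x| ≤ c * ω x := by
  obtain ⟨c, hc⟩ := hv.2
  exact ⟨max c 0, le_max_right c 0, fun x =>
    (hc x).trans (mul_le_mul_of_nonneg_right (le_max_left c 0) (hω x))⟩

theorem comp_mem_boundedMeasurable {δ : ℝ → ℝ} (hδ : LipschitzWith 1 δ) (hδ0 : δ 0 = 0)
    {v : X → ℝ} (hv : v ∈ boundedMeasurable ω) : (fun x => δ (v x)) ∈ boundedMeasurable ω := by
  obtain ⟨c, hc⟩ := hv.2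
  refine ⟨hδ.continuous.measurable.comp hv.1, c, fun x => le_trans ?_ (hc x)⟩
  simpa [Real.dist_eq, hδ0] using hδ.dist_le_mul (v x) 0

theorem integrable_of_mem_boundedMeasurable {μ : Measure X} (hω : Integrable ω μ) {v : X → ℝ}
    (hv : v ∈ boundedMeasurable ω) : Integrable v μ := by
  obtain ⟨c, hc⟩ := hv.2
  exact (hω.const_mul c).mono' hv.1.aestronglyMeasurable (ae_of_all _ hc)

theorem abs_integral_le_mul_integral_of_abs_le {μ : Measure X} (hω : Integrable ω μ)
    {g : X → ℝ} {c : ℝ} (hg : ∀ x, |g x| ≤ c * ω x) : |∫ x, g x ∂μ| ≤ c * ∫ x, ω x ∂μ := by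
  rw [← integral_const_mul]
  exact norm_integral_le_of_norm_le (f := g) (hω.const_mul c) (ae_of_all _ hg)

/-- The measurable elements of `ℓ^∞(X)`, a complete metric space isometric to
`(boundedMeasurable ω, ‖·‖_ω)` via `mulWeight`. -/
def measurableLinfty (X : Type*) [MeasurableSpace X] : Set (lp (fun _ : X => ℝ) ∞) :=
  {g | Measurable g}

instance : CompleteSpace (measurableLinfty X) :=
  haveI : IsClosed (measurableLinfty X) := lp.isClosed_setOf_measurable
  IsClosed.completeSpace_coe

instance : Nonempty (measurableLinfty X) := ⟨⟨0, measurable_const⟩⟩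

def mulWeight (ω : X → ℝ) (g : measurableLinfty X) : X → ℝ := fun x => g.1 x * ω x

theorem mulWeight_mem (hωm : Measurable ω) (hω : ∀ x, 0 < ω x) (g : measurableLinfty X) :
    mulWeight ω g ∈ boundedMeasurable ω :=
  ⟨g.2.mul hωm, ‖g.1‖, fun x => by
    rw [mulWeight, abs_mul, abs_of_pos (hω x)]
    exact mul_le_mul_of_nonneg_right (lp.norm_apply_le_norm ENNReal.top_ne_zero g.1 x) (hω x).le⟩

theorem mulWeight_injective (hω : ∀ x, 0 < ω x) : Function.Injective (mulWeight ω) :=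
  fun _ _ hgh => Subtype.ext <| lp.ext <| funext fun x =>
    mul_right_cancel₀ (hω x).ne' (congrFun hgh x)

theorem abs_mulWeight_sub_le (hω : ∀ x, 0 < ω x) (g h : measurableLinfty X) (x : X) :
    |mulWeight ω g x - mulWeight ω h x| ≤ dist g h * ω x := by
  rw [mulWeight, mulWeight, ← sub_mul, abs_mul, abs_of_pos (hω x)]
  refine mul_le_mul_of_nonneg_right ?_ (hω x).le
  simpa only [Subtype.dist_eq, dist_eq_norm, lp.coeFn_sub, Pi.sub_apply, Real.norm_eq_abs] using
    lp.norm_apply_le_norm ENNReal.top_ne_zero (g.1 - h.1) x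

theorem dist_eq_iSup_abs_mulWeight_sub_div (hω : ∀ x, 0 < ω x) (g h : measurableLinfty X) :
    dist g h = ⨆ x, |mulWeight ω g x - mulWeight ω h x| / ω x := by
  rw [Subtype.dist_eq, dist_eq_norm, lp.norm_eq_ciSup]
  congr 1 with x
  rw [mulWeight, mulWeight, ← sub_mul, abs_mul, abs_of_pos (hω x),
    mul_div_cancel_right₀ _ (hω x).ne']
  rfl

noncomputable def divWeight (hωm : Measurable ω) (hω : ∀ x, 0 < ω x) (v : X → ℝ)
    (hv : v ∈ boundedMeasurable ω) : measurableLinfty X :=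
  ⟨⟨fun x => v x / ω x, memℓp_infty <| by
    obtain ⟨c, hc⟩ := hv.2
    refine ⟨c, forall_mem_range.2 fun x => ?_⟩
    rw [Real.norm_eq_abs, abs_div, abs_of_pos (hω x), div_le_iff₀ (hω x)]
    exact hc x⟩, hv.1.div hωm⟩

theorem mulWeight_divWeight (hωm : Measurable ω) (hω : ∀ x, 0 < ω x) (v : X → ℝ)
    (hv : v ∈ boundedMeasurable ω) : mulWeight ω (divWeight hωm hω v hv) = v :=
  funext fun x => div_mul_cancel₀ (v x) (hω x).ne'

theorem exists_fixedPoint_of_weighted_contraction (hωm : Measurable ω) (hω : ∀ x, 0 < ω x)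
    {T : (X → ℝ) → X → ℝ} (hT : MapsTo T (boundedMeasurable ω) (boundedMeasurable ω))
    {φ : ℝ≥0 → ℝ≥0} (hφ : Monotone φ) (hφiter : ∀ t, Tendsto (fun n => φ^[n] t) atTop (𝓝 0))
    (hcontr : ∀ v ∈ boundedMeasurable ω, ∀ w ∈ boundedMeasurable ω, ∀ c : ℝ≥0,
      (∀ x, |v x - w x| ≤ c * ω x) → ∀ x, |T v x - T w x| ≤ φ c * ω x) :
    ∃ vf ∈ boundedMeasurable ω, T vf = vf ∧ (∀ w ∈ boundedMeasurable ω, T w = w → w = vf) ∧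
      ∀ w ∈ boundedMeasurable ω,
        Tendsto (fun n => ⨆ x, |T^[n] w x - vf x| / ω x) atTop (𝓝 0) := by
  set Φ : measurableLinfty X → measurableLinfty X := fun g =>
    divWeight hωm hω (T (mulWeight ω g)) (hT (mulWeight_mem hωm hω g))
  have hsemiconj : Function.Semiconj (mulWeight ω) Φ T := fun g =>
    mulWeight_divWeight hωm hω _ _
  have hΦ : ∀ g h, nndist (Φ g) (Φ h) ≤ φ (nndist g h) := by
    intro g h
    rw [← NNReal.coe_le_coe, coe_nndist, dist_eq_iSup_abs_mulWeight_sub_div hω]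
    refine Real.iSup_le (fun x => (div_le_iff₀ (hω x)).2 ?_) NNReal.zero_le_coe
    rw [hsemiconj g, hsemiconj h]
    exact hcontr _ (mulWeight_mem hωm hω g) _ (mulWeight_mem hωm hω h) (nndist g h)
      (abs_mulWeight_sub_le hω g h) x
  obtain ⟨p, hpfix, hpconv⟩ := exists_isFixedPt_tendsto_iterate_of_nndist_le hφ hφiter hΦ
  have hpreimage : ∀ w (hw : w ∈ boundedMeasurable ω), ∃ g, mulWeight ω g = w :=
    fun w hw => ⟨_, mulWeight_divWeight hωm hω w hw⟩
  refine ⟨mulWeight ω p, mulWeight_mem hωm hω p, by rw [← hsemiconj, hpfix.eq], ?_, ?_⟩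
  · rintro w hw hTw
    obtain ⟨g, rfl⟩ := hpreimage w hw
    have hg : Function.IsFixedPt Φ g := mulWeight_injective hω (by rw [hsemiconj, hTw])
    rw [tendsto_nhds_unique (tendsto_const_nhds.congr fun n => (hg.iterate n).eq.symm)
      (hpconv g)]
  · rintro w hw
    obtain ⟨g, rfl⟩ := hpreimage w hw
    simpa only [← (hsemiconj.iterate_right _) _, ← dist_eq_iSup_abs_mulWeight_sub_div hω] using
      tendsto_iff_dist_tendsto_zero.1 (hpconv g)

end Weighted

theorem le_self_of_lt_self_of_monotoneOn {γ : ℝ → ℝ} (hγm : MonotoneOn γ (Ici 0))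
    (hγlt : ∀ s, 0 < s → γ s < s) {s : ℝ} (hs : 0 ≤ s) : γ s ≤ s := by
  obtain rfl | hs := hs.eq_or_lt
  · exact le_of_forall_gt_imp_ge_of_dense fun ε hε =>
      (hγm (mem_Ici.2 le_rfl) (mem_Ici.2 hε.le) hε.le).trans (hγlt ε hε).le
  · exact (hγlt s hs).le

theorem abs_sub_le_of_abs_sub_le_mul {δ γ : ℝ → ℝ} (hδγ : ∀ z₁ z₂, |δ z₁ - δ z₂| ≤ γ |z₁ - z₂|)
    (hγm : MonotoneOn γ (Ici 0)) (hγ0 : ∀ s, 0 ≤ s → 0 ≤ γ s) {w : ℝ} (hw : 0 ≤ w)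
    (hγw : ∀ y, 0 < y → γ (w * y) ≤ w * γ y) {a b c : ℝ} (hc : 0 ≤ c) (h : |a - b| ≤ c * w) :
    |δ a - δ b| ≤ γ c * w := by
  obtain rfl | hc := hc.eq_or_lt
  · obtain rfl : a = b := by simpa [sub_eq_zero] using h
    simpa using mul_nonneg (hγ0 0 le_rfl) hw
  calc |δ a - δ b| ≤ γ |a - b| := hδγ a b
    _ ≤ γ (w * c) := hγm (mem_Ici.2 (abs_nonneg _)) (mem_Ici.2 (mul_nonneg hw hc.le)) (by linarith)
    _ ≤ γ c * w := by linarith [hγw c hc]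

theorem exists_comparison_of_subadditive {γ : ℝ → ℝ} {α : ℝ} (hα : 0 ≤ α)
    (hγm : MonotoneOn γ (Ici 0)) (hγ0 : ∀ s, 0 ≤ s → 0 ≤ γ s)
    (hγsub : ∀ y, 0 ≤ y → ∀ s, 0 ≤ s → γ (y + s) ≤ γ y + γ s)
    (hαγ : ∀ s, 0 < s → α * γ s < s) :
    ∃ φ : ℝ≥0 → ℝ≥0, (∀ t, (φ t : ℝ) = α * γ t) ∧ Monotone φ ∧
      ∀ t, Tendsto (fun n => φ^[n] t) atTop (𝓝 0) := by
  set φ : ℝ≥0 → ℝ≥0 := fun t => ⟨α * γ t, mul_nonneg hα (hγ0 t t.2)⟩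
  have hφ : Monotone φ := fun s t hst =>
    mul_le_mul_of_nonneg_left (hγm s.2 t.2 (NNReal.coe_le_coe.2 hst)) hα
  refine ⟨φ, fun t => rfl, hφ, tendsto_iterate_nhds_zero_of_subadditive hφ
    (fun t ht => NNReal.coe_lt_coe.1 (hαγ t ht)) fun s t => ?_⟩
  show α * γ (s + t) ≤ α * γ s + α * γ t
  rw [← mul_add]
  exact mul_le_mul_of_nonneg_left (hγsub s s.2 t t.2) hα

section PolicyOperator

variable {X A : Type*} [MeasurableSpace X] [MeasurableSpace A] {q : Kernel (X × A) X}
  {u : X × A → ℝ} {δ : ℝ → ℝ} {f : X → A} {ω : X → ℝ}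

theorem measurable_policyOp (hu : Measurable u) (hf : Measurable f) (hδ : Measurable δ)
    {v : X → ℝ} (hv : Measurable v) : Measurable (policyOp q u δ f v) := by
  have hint : Measurable fun p : X × A => ∫ y, δ (v y) ∂(q p) :=
    (hδ.comp hv).stronglyMeasurable.integral_kernel.measurable
  exact (hu.comp (measurable_id.prodMk hf)).add (hint.comp (measurable_id.prodMk hf))

theorem policyOp_mapsTo (hω : ∀ x, 0 < ω x) (hu : Measurable u) (hf : Measurable f)
    (hδ : LipschitzWith 1 δ) (hδ0 : δ 0 = 0) {z α : ℝ} (huω : ∀ x, |u (x, f x)| ≤ z * ω x)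
    (hωq : ∀ x, Integrable ω (q (x, f x)) ∧ ∫ y, ω y ∂(q (x, f x)) ≤ α * ω x) :
    MapsTo (policyOp q u δ f) (boundedMeasurable ω) (boundedMeasurable ω) := by
  intro v hv
  obtain ⟨c, hc0, hc⟩ :=
    exists_nonneg_bound_of_mem_boundedMeasurable (hω · |>.le) (comp_mem_boundedMeasurable hδ hδ0 hv)
  refine ⟨measurable_policyOp hu hf hδ.continuous.measurable hv.1, z + c * α, fun x => ?_⟩
  calc |policyOp q u δ f v x| ≤ |u (x, f x)| + |∫ y, δ (v y) ∂(q (x, f x))| := abs_add_le _ _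
    _ ≤ z * ω x + c * (α * ω x) := add_le_add (huω x)
        ((abs_integral_le_mul_integral_of_abs_le (hωq x).1 hc).trans
          (mul_le_mul_of_nonneg_left (hωq x).2 hc0))
    _ = (z + c * α) * ω x := by ring

theorem abs_policyOp_sub_le (hδ : LipschitzWith 1 δ) (hδ0 : δ 0 = 0) {v w : X → ℝ}
    (hv : v ∈ boundedMeasurable ω) (hw : w ∈ boundedMeasurable ω) {x : X}
    (hωi : Integrable ω (q (x, f x))) {b : ℝ} (hvw : ∀ y, |δ (v y) - δ (w y)| ≤ b * ω y) :
    |policyOp q u δ f v x - policyOp q u δ f w x| ≤ b * ∫ y, ω y ∂(q (x, f x)) := by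
  rw [policyOp, policyOp, add_sub_add_left_eq_sub,
    ← integral_sub (integrable_of_mem_boundedMeasurable hωi (comp_mem_boundedMeasurable hδ hδ0 hv))
      (integrable_of_mem_boundedMeasurable hωi (comp_mem_boundedMeasurable hδ hδ0 hw))]
  exact abs_integral_le_mul_integral_of_abs_le hωi hvw

end PolicyOperator

theorem policy_operator_fixed_point_general
    {X A : Type*}
    [MeasurableSpace X] [MeasurableSpace A]
    (D : Set (X × A))
    (q : Kernel (X × A) X)
    (ω : X → ℝ) (hωm : Measurable ω) (hω1 : ∀ x, 1 ≤ ω x)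
    (u : X × A → ℝ) (hu : Measurable u)
    (z : ℝ) (huω : ∀ p ∈ D, |u p| ≤ z * ω p.1)
    (δ : ℝ → ℝ) (γ : ℝ → ℝ)
    (hγm : MonotoneOn γ (Set.Ici 0)) (hγ0 : ∀ s : ℝ, 0 ≤ s → 0 ≤ γ s)
    (hγlt : ∀ s : ℝ, 0 < s → γ s < s)
    (hδγ : ∀ z₁ z₂ : ℝ, |δ z₁ - δ z₂| ≤ γ |z₁ - z₂|)
    (hδ0 : δ 0 = 0)
    (hγsub : ∀ y : ℝ, 0 ≤ y → ∀ s : ℝ, 0 ≤ s → γ (y + s) ≤ γ y + γ s)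
    (hγω : ∀ x : X, ∀ y : ℝ, 0 < y → γ (ω x * y) ≤ ω x * γ y)
    (α : ℝ) (hα : 0 < α)
    (hωq : ∀ p ∈ D, Integrable ω (q p) ∧ ∫ y, ω y ∂(q p) ≤ α * ω p.1)
    (hαcase : α ≤ 1 ∨ (1 < α ∧ ∀ s : ℝ, 0 < s → α * γ s < s))
    (f : X → A) (hf : Measurable f) (hfD : ∀ x, (x, f x) ∈ D) :
    (∀ v : X → ℝ, Measurable v → (∃ c : ℝ, ∀ x, |v x| ≤ c * ω x) →
      Measurable (policyOp q u δ f v) ∧ ∃ c : ℝ, ∀ x, |policyOp q u δ f v x| ≤ c * ω x) ∧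
    ∃ vf : X → ℝ, Measurable vf ∧ (∃ c : ℝ, ∀ x, |vf x| ≤ c * ω x) ∧
      policyOp q u δ f vf = vf ∧
      (∀ w : X → ℝ, Measurable w → (∃ c : ℝ, ∀ x, |w x| ≤ c * ω x) →
        policyOp q u δ f w = w → w = vf) ∧
      (∀ w : X → ℝ, Measurable w → (∃ c : ℝ, ∀ x, |w x| ≤ c * ω x) →
        Tendsto (fun n : ℕ => ⨆ x : X, |(policyOp q u δ f)^[n] w x - vf x| / ω x)
          atTop (nhds 0)) := by
  have hω : ∀ x, 0 < ω x := fun x => one_pos.trans_le (hω1 x)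
  have hδ : LipschitzWith 1 δ := LipschitzWith.mk_one fun a b => by
    simpa only [Real.dist_eq] using
      (hδγ a b).trans (le_self_of_lt_self_of_monotoneOn hγm hγlt (abs_nonneg _))
  have hq : ∀ x, Integrable ω (q (x, f x)) ∧ ∫ y, ω y ∂(q (x, f x)) ≤ α * ω x :=
    fun x => hωq _ (hfD x)
  have hT : MapsTo (policyOp q u δ f) (boundedMeasurable ω) (boundedMeasurable ω) :=
    policyOp_mapsTo hω hu hf hδ hδ0 (fun x => huω _ (hfD x)) hq
  have hαγ : ∀ s, 0 < s → α * γ s < s := fun s hs => hαcase.elim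
    (fun h => (mul_le_of_le_one_left (hγ0 s hs.le) h).trans_lt (hγlt s hs)) fun h => h.2 s hs
  obtain ⟨φ, hφ, hφm, hφiter⟩ := exists_comparison_of_subadditive hα.le hγm hγ0 hγsub hαγ
  have hcontr : ∀ v ∈ boundedMeasurable ω, ∀ w ∈ boundedMeasurable ω, ∀ c : ℝ≥0,
      (∀ x, |v x - w x| ≤ c * ω x) →
        ∀ x, |policyOp q u δ f v x - policyOp q u δ f w x| ≤ φ c * ω x := by
    intro v hv w hw c hvw x
    calc _ ≤ γ c * ∫ y, ω y ∂(q (x, f x)) := abs_policyOp_sub_le hδ hδ0 hv hw (hq x).1 fun y =>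
          abs_sub_le_of_abs_sub_le_mul hδγ hγm hγ0 (hω y).le (hγω y) c.2 (hvw y)
      _ ≤ γ c * (α * ω x) := mul_le_mul_of_nonneg_left (hq x).2 (hγ0 c c.2)
      _ = φ c * ω x := by rw [hφ]; ring
  obtain ⟨vf, hvf, hfix, huniq, hconv⟩ :=
    exists_fixedPoint_of_weighted_contraction hωm hω hT hφm hφiter hcontr
  exact ⟨fun v hv hc => hT ⟨hv, hc⟩, vf, hvf.1, hvf.2, hfix, fun w hw hc => huniq w ⟨hw, hc⟩,
    fun w hw hc => hconv w ⟨hw, hc⟩⟩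

/-- For a Borel measurable selector `f`, the operator `T_f` maps the space of
measurable `ω`-bounded functions into itself, it has there a unique fixed point
`v_f`, and the iterates `T_f⁽ⁿ⁾ w` converge to `v_f` in the weighted sup-norm. -/
theorem policy_operator_fixed_point
    {X A : Type*}
    [MetricSpace X] [SecondCountableTopology X] [MeasurableSpace X] [BorelSpace X] [Nonempty X]
    [MetricSpace A] [SecondCountableTopology A] [MeasurableSpace A] [BorelSpace A] [Nonempty A]
    (D : Set (X × A)) (hD : MeasurableSet D) (hDne : ∀ x : X, ∃ a : A, (x, a) ∈ D)
    (q : Kernel (X × A) X) [IsMarkovKernel q]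
    (ω : X → ℝ) (hωm : Measurable ω) (hω1 : ∀ x, 1 ≤ ω x)
    (u : X × A → ℝ) (hu : Measurable u)
    (z : ℝ) (hz : 0 < z) (huω : ∀ p ∈ D, |u p| ≤ z * ω p.1)
    (δ : ℝ → ℝ) (γ : ℝ → ℝ)
    (hγm : MonotoneOn γ (Set.Ici 0)) (hγ0 : ∀ s : ℝ, 0 ≤ s → 0 ≤ γ s)
    (hγlt : ∀ s : ℝ, 0 < s → γ s < s)
    (hδγ : ∀ z₁ z₂ : ℝ, |δ z₁ - δ z₂| ≤ γ |z₁ - z₂|)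
    (hδm : Monotone δ) (hδ0 : δ 0 = 0)
    (hγsub : ∀ y : ℝ, 0 ≤ y → ∀ s : ℝ, 0 ≤ s → γ (y + s) ≤ γ y + γ s)
    (hγω : ∀ x : X, ∀ y : ℝ, 0 < y → γ (ω x * y) ≤ ω x * γ y)
    (α : ℝ) (hα : 0 < α)
    (hωq : ∀ p ∈ D, Integrable ω (q p) ∧ ∫ y, ω y ∂(q p) ≤ α * ω p.1)
    (hαcase : α ≤ 1 ∨ (1 < α ∧ ∀ s : ℝ, 0 < s → α * γ s < s))
    (f : X → A) (hf : Measurable f) (hfD : ∀ x, (x, f x) ∈ D) :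
    (∀ v : X → ℝ, Measurable v → (∃ c : ℝ, ∀ x, |v x| ≤ c * ω x) →
      Measurable (policyOp q u δ f v) ∧ ∃ c : ℝ, ∀ x, |policyOp q u δ f v x| ≤ c * ω x) ∧
    ∃ vf : X → ℝ, Measurable vf ∧ (∃ c : ℝ, ∀ x, |vf x| ≤ c * ω x) ∧
      policyOp q u δ f vf = vf ∧
      (∀ w : X → ℝ, Measurable w → (∃ c : ℝ, ∀ x, |w x| ≤ c * ω x) →
        policyOp q u δ f w = w → w = vf) ∧
      (∀ w : X → ℝ, Measurable w → (∃ c : ℝ, ∀ x, |w x| ≤ c * ω x) →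
        Tendsto (fun n : ℕ => ⨆ x : X, |(policyOp q u δ f)^[n] w x - vf x| / ω x)
          atTop (nhds 0)) :=
  policy_operator_fixed_point_general D q ω hωm hω1 u hu z huω δ γ hγm hγ0 hγlt hδγ hδ0 hγsub hγω α
    hα hωq hαcase f hf hfD
end

section
/- Let X and A be Borel spaces, D a nonempty Borel subset of X×A with nonempty compact x-sections A(x) such that x ↦ A(x) is upper semicontinuous ({x : A(x) ∩ K ≠ ∅} closed for every closed K ⊂ A), q a Borel measurable transition probability kernel from X×A to X that is weakly continuous on D ((x,a) ↦ ∫ φ dq(·|x,a) continuous for every bounded continuous φ), ω : X → [1,∞) continuous with (x,a) ↦ ∫_X ω(y) q(dy|x,a) continuous on D and ∫_X ω(y) q(dy|x,a) ≤ αω(x) on D for some α > 0, u : D → ℝ upper semicontinuous with |u(x,a)| ≤ zω(x) on D for some z > 0, and δ : ℝ → ℝ increasing and continuous with |δ(s)| ≤ γ(|s|) for all s ∈ ℝ, where γ : [0,∞) → [0,∞) is increasing, subadditive, satisfies γ(s) < s for s > 0 and γ(ω(x)y) ≤ ω(x)γ(y) for x ∈ X, y > 0. Let v : X → ℝ be upper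 semicontinuous with sup_x |v(x)|/ω(x) < ∞. Then: (i) the function Sv(x,a) := u(x,a) + ∫_X δ(v(y)) q(dy|x,a) is upper semicontinuous on D and satisfies sup_{(x,a)∈D} |Sv(x,a)|/ω(x) < ∞; and (ii) Tv(x) := max_{a∈A(x)} Sv(x,a) is upper semicontinuous on X with sup_x |Tv(x)|/ω(x) < ∞. -/
open MeasureTheory ProbabilityTheory Filter Topology Metric

/-- Moreau–Yosida approximation: a nonpositive upper semicontinuous function on a
nonempty metric space is the pointwise limit of continuous nonpositive functions
lying above it. -/
lemma myosida_approx {E : Type*} [MetricSpace E] [Nonempty E] {h : E → ℝ}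
    (hh : UpperSemicontinuous h) (hb : ∀ x, h x ≤ 0) :
    ∃ f : ℕ → E → ℝ, (∀ n, Continuous (f n)) ∧ (∀ n x, h x ≤ f n x) ∧
      (∀ n x, f n x ≤ 0) ∧ ∀ x, Tendsto (fun n => f n x) atTop (𝓝 (h x)) := by
  set f : ℕ → E → ℝ := fun n x => ⨆ y : E, (h y - n * dist x y) with hfdef
  have hbdd : ∀ (n : ℕ) (x : E), BddAbove (Set.range fun y => h y - n * dist x y) := by
    intro n x
    refine ⟨0, ?_⟩
    rintro r ⟨y, rfl⟩
    show h y - (n:ℝ) * dist x y ≤ 0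
    have h2 : (0:ℝ) ≤ (n:ℝ) * dist x y := mul_nonneg (Nat.cast_nonneg n) dist_nonneg
    linarith [hb y]
  have hge : ∀ n x, h x ≤ f n x := by
    intro n x
    have h1 := le_ciSup (hbdd n x) x
    show h x ≤ ⨆ y : E, (h y - n * dist x y)
    simpa using h1
  have hle : ∀ n x, f n x ≤ 0 := by
    intro n x
    show (⨆ y : E, (h y - n * dist x y)) ≤ 0
    refine ciSup_le fun y => ?_
    have h2 : (0:ℝ) ≤ (n:ℝ) * dist x y := mul_nonneg (Nat.cast_nonneg n) dist_nonneg
    linarith [hb y]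
  have hkey : ∀ (n : ℕ) (x x' : E), f n x ≤ f n x' + n * dist x x' := by
    intro n x x'
    show (⨆ y : E, (h y - n * dist x y)) ≤ f n x' + n * dist x x'
    refine ciSup_le fun y => ?_
    have h1 : h y - n * dist x' y ≤ f n x' := le_ciSup (hbdd n x') y
    have h3 : dist x' y ≤ dist x' x + dist x y := dist_triangle _ _ _
    have h4 : (n:ℝ) * dist x' y ≤ (n:ℝ) * (dist x' x + dist x y) :=
      mul_le_mul_of_nonneg_left h3 (Nat.cast_nonneg n)
    have h5 : (n:ℝ) * (dist x' x + dist x y) = n * dist x' x + n * dist x y := mul_add _ _ _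
    have h7 : (n:ℝ) * dist x' x = (n:ℝ) * dist x x' := by rw [dist_comm]
    linarith
  refine ⟨f, ?_, hge, hle, ?_⟩
  · intro n
    refine LipschitzWith.continuous (K := n) (LipschitzWith.of_dist_le_mul fun x x' => ?_)
    rw [Real.dist_eq, abs_sub_le_iff]
    have c1 := hkey n x x'
    have c2 := hkey n x' x
    have h7 : (n:ℝ) * dist x' x = (n:ℝ) * dist x x' := by rw [dist_comm]
    constructor <;> simp only [NNReal.coe_natCast] <;> linarith
  · intro x
    rw [Metric.tendsto_atTop]
    intro ε hε
    obtain ⟨r, hr, hball⟩ := Metric.eventually_nhds_iff_ball.1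
      (hh x (h x + ε / 2) (by linarith))
    obtain ⟨N, hN⟩ := exists_nat_ge ((-(h x)) / r)
    refine ⟨N, fun n hn => ?_⟩
    have hNr : -(h x) ≤ (N:ℝ) * r := by
      rw [div_le_iff₀ hr] at hN; linarith
    have hnr : (N:ℝ) * r ≤ (n:ℝ) * r :=
      mul_le_mul_of_nonneg_right (by exact_mod_cast hn) hr.le
    have hup : f n x ≤ h x + ε / 2 := by
      show (⨆ y : E, (h y - n * dist x y)) ≤ h x + ε / 2
      refine ciSup_le fun y => ?_
      by_cases hy : dist y x < r
      · have h8 := hball y hy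
        have h9 : (0:ℝ) ≤ (n:ℝ) * dist x y := mul_nonneg (Nat.cast_nonneg n) dist_nonneg
        linarith
      · push_neg at hy
        have hd : r ≤ dist x y := by rwa [dist_comm]
        have h8 : (n:ℝ) * r ≤ (n:ℝ) * dist x y :=
          mul_le_mul_of_nonneg_left hd (Nat.cast_nonneg n)
        have h9 := hb y
        linarith
    have hlo := hge n x
    rw [Real.dist_eq, abs_sub_lt_iff]
    constructor <;> linarith
  
/-- An upper semicontinuous real function on a nonempty compact set (in a metric space)
attains its maximum. -/
lemma usc_exists_max {A : Type*} [MetricSpace A] {S : Set A} (hS : IsCompact S)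
    (hne : S.Nonempty) {f : A → ℝ} (hf : UpperSemicontinuousOn f S) :
    ∃ a ∈ S, ∀ b ∈ S, f b ≤ f a := by
  by_cases hbdd : BddAbove (f '' S)
  · set M := sSup (f '' S) with hM
    have hMub : ∀ b ∈ S, f b ≤ M := fun b hb => le_csSup hbdd ⟨b, hb, rfl⟩
    have hsel : ∀ n : ℕ, ∃ a, a ∈ S ∧ M - 1 / (n + 1) < f a := by
      intro n
      obtain ⟨r, hr, hlt⟩ := exists_lt_of_lt_csSup (hne.image f)
        (show M - 1 / ((n:ℝ) + 1) < M by
          have : (0:ℝ) < 1 / ((n:ℝ) + 1) := by positivity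
          linarith)
      obtain ⟨a, ha, rfl⟩ := hr
      exact ⟨a, ha, hlt⟩
    choose uu hu hfu using hsel
    obtain ⟨a, haS, φ, hφ, hconv⟩ := hS.tendsto_subseq hu
    refine ⟨a, haS, fun b hb => (hMub b hb).trans ?_⟩
    by_contra hcon
    push_neg at hcon
    set y := (f a + M) / 2 with hy
    have h1 : f a < y := by rw [hy]; linarith
    have h2 : y < M := by rw [hy]; linarith
    have hev := hf a haS y h1
    have htd : Tendsto (uu ∘ φ) atTop (𝓝[S] a) :=
      tendsto_nhdsWithin_of_tendsto_nhds_of_eventually_within _ hconv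
        (Eventually.of_forall fun n => hu (φ n))
    have hev2 : ∀ᶠ n in atTop, f (uu (φ n)) < y := htd.eventually hev
    have htnd : Tendsto (fun n : ℕ => 1 / ((φ n : ℝ) + 1)) atTop (𝓝 0) :=
      tendsto_one_div_add_atTop_nhds_zero_nat.comp hφ.tendsto_atTop
    have hev3 : ∀ᶠ n : ℕ in atTop, 1 / ((φ n : ℝ) + 1) < M - y :=
      htnd.eventually_lt_const (by linarith)
    obtain ⟨n, hn1, hn2⟩ := (hev2.and hev3).exists
    have := hfu (φ n)
    linarith
  · exfalso
    have hsel : ∀ n : ℕ, ∃ a, a ∈ S ∧ (n:ℝ) < f a := by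
      intro n
      by_contra hcon
      push_neg at hcon
      exact hbdd ⟨n, by rintro r ⟨a, ha, rfl⟩; exact hcon a ha⟩
    choose uu hu hfu using hsel
    obtain ⟨a, haS, φ, hφ, hconv⟩ := hS.tendsto_subseq hu
    have hev := hf a haS (f a + 1) (lt_add_one _)
    have htd : Tendsto (uu ∘ φ) atTop (𝓝[S] a) :=
      tendsto_nhdsWithin_of_tendsto_nhds_of_eventually_within _ hconv
        (Eventually.of_forall fun n => hu (φ n))
    have hev2 : ∀ᶠ n in atTop, f (uu (φ n)) < f a + 1 := htd.eventually hev
    have hev3 : ∀ᶠ n : ℕ in atTop, f a + 1 < (φ n : ℝ) :=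
      (tendsto_natCast_atTop_atTop.comp hφ.tendsto_atTop).eventually_gt_atTop (f a + 1)
    obtain ⟨n, hn1, hn2⟩ := (hev2.and hev3).exists
    have := hfu (φ n)
    linarith

/-- If `J ≤ F n` on `s`, each `F n` is continuous on `s` and `F n → J` pointwise on `s`,
then `J` is upper semicontinuous on `s`. -/
lemma usc_of_approx {α : Type*} [TopologicalSpace α] {s : Set α} {F : ℕ → α → ℝ} {J : α → ℝ}
    (hF : ∀ n, ContinuousOn (F n) s) (hle : ∀ n, ∀ p ∈ s, J p ≤ F n p)
    (hlim : ∀ p ∈ s, Tendsto (fun n => F n p) atTop (𝓝 (J p))) :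
    UpperSemicontinuousOn J s := by
  intro p hp c hc
  obtain ⟨n, hn⟩ := ((hlim p hp).eventually_lt_const hc).exists
  have hev : ∀ᶠ r in 𝓝[s] p, F n r < c := (hF n p hp).eventually_lt_const hn
  filter_upwards [hev, self_mem_nhdsWithin] with r h1 h2
  exact lt_of_le_of_lt (hle n r h2) h1

/-- Lemma 3(a) of the paper: under assumptions (W), for an upper semicontinuous
`ω`-bounded `v`, the function `Sv(x,a) = u(x,a) + ∫ δ(v(y)) q(dy|x,a)` is upper
semicontinuous and `ω`-bounded on `D`, and `Tv(x) = max_{a ∈ A(x)} Sv(x,a)` is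
upper semicontinuous and `ω`-bounded on `X`. -/
theorem bellman_operator_preserves_usc
    {X A : Type*}
    [MetricSpace X] [SecondCountableTopology X] [MeasurableSpace X] [BorelSpace X] [Nonempty X]
    [MetricSpace A] [SecondCountableTopology A] [MeasurableSpace A] [BorelSpace A] [Nonempty A]
    (D : Set (X × A)) (hD : MeasurableSet D) (hDne : ∀ x : X, ∃ a : A, (x, a) ∈ D)
    (hAcomp : ∀ x : X, IsCompact {a : A | (x, a) ∈ D})
    (hAusc : ∀ K : Set A, IsClosed K → IsClosed {x : X | ∃ a ∈ K, (x, a) ∈ D})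
    (q : Kernel (X × A) X) [IsMarkovKernel q]
    (hqw : ∀ φ : X → ℝ, Continuous φ → (∃ C : ℝ, ∀ y, |φ y| ≤ C) →
      ContinuousOn (fun p : X × A => ∫ y, φ y ∂(q p)) D)
    (ω : X → ℝ) (hωc : Continuous ω) (hω1 : ∀ x, 1 ≤ ω x)
    (hωqc : ContinuousOn (fun p : X × A => ∫ y, ω y ∂(q p)) D)
    (α : ℝ) (hα : 0 < α)
    (hωq : ∀ p ∈ D, Integrable ω (q p) ∧ ∫ y, ω y ∂(q p) ≤ α * ω p.1)
    (u : X × A → ℝ) (huusc : UpperSemicontinuousOn u D)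
    (z : ℝ) (hz : 0 < z) (huω : ∀ p ∈ D, |u p| ≤ z * ω p.1)
    (δ : ℝ → ℝ) (hδm : Monotone δ) (hδc : Continuous δ)
    (γ : ℝ → ℝ) (hδγ : ∀ s : ℝ, |δ s| ≤ γ |s|)
    (hγm : MonotoneOn γ (Set.Ici 0)) (hγ0 : ∀ s : ℝ, 0 ≤ s → 0 ≤ γ s)
    (hγlt : ∀ s : ℝ, 0 < s → γ s < s)
    (hγsub : ∀ y : ℝ, 0 ≤ y → ∀ s : ℝ, 0 ≤ s → γ (y + s) ≤ γ y + γ s)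
    (hγω : ∀ x : X, ∀ y : ℝ, 0 < y → γ (ω x * y) ≤ ω x * γ y)
    (v : X → ℝ) (hv : Measurable v) (hvusc : UpperSemicontinuous v)
    (hvb : ∃ c : ℝ, ∀ x, |v x| ≤ c * ω x) :
    (UpperSemicontinuousOn (fun p : X × A => u p + ∫ y, δ (v y) ∂(q p)) D ∧
      ∃ c : ℝ, 0 < c ∧ ∀ p ∈ D, |u p + ∫ y, δ (v y) ∂(q p)| ≤ c * ω p.1) ∧
    ∃ Tv : X → ℝ,
      (∀ x : X, ∃ a : A, (x, a) ∈ D ∧ Tv x = u (x, a) + ∫ y, δ (v y) ∂(q (x, a)) ∧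
        ∀ b : A, (x, b) ∈ D → u (x, b) + ∫ y, δ (v y) ∂(q (x, b)) ≤ Tv x) ∧
      UpperSemicontinuous Tv ∧ ∃ c : ℝ, 0 < c ∧ ∀ x, |Tv x| ≤ c * ω x := by
  obtain ⟨c₀, hc₀⟩ := hvb
  have hωpos : ∀ x, (0:ℝ) < ω x := fun x => lt_of_lt_of_le one_pos (hω1 x)
  set c₁ : ℝ := |c₀| + 1 with hc₁def
  have hc₁pos : 0 < c₁ := by positivity
  have hvb' : ∀ x, |v x| ≤ c₁ * ω x := by
    intro x
    refine (hc₀ x).trans ?_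
    have h1 : c₀ ≤ c₁ := by
      have := le_abs_self c₀; simp [hc₁def]; linarith
    exact mul_le_mul_of_nonneg_right h1 (hωpos x).le
  set Cg : ℝ := γ c₁ with hCgdef
  have hCg0 : 0 ≤ Cg := hγ0 c₁ hc₁pos.le
  have hgb : ∀ y, |δ (v y)| ≤ Cg * ω y := by
    intro y
    calc |δ (v y)| ≤ γ |v y| := hδγ _
      _ ≤ γ (ω y * c₁) := by
          refine hγm (Set.mem_Ici.2 (abs_nonneg _))
            (Set.mem_Ici.2 (mul_nonneg (hωpos y).le hc₁pos.le)) ?_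
          rw [mul_comm]; exact hvb' y
      _ ≤ ω y * γ c₁ := hγω y c₁ hc₁pos
      _ = Cg * ω y := mul_comm _ _
  -- the shifted function h
  set h : X → ℝ := fun y => δ (v y) - Cg * ω y with hhdef
  have hhb : ∀ y, |h y| ≤ 2 * Cg * ω y := by
    intro y
    have h1 := abs_le.1 (hgb y)
    have h2 : 0 ≤ Cg * ω y := mul_nonneg hCg0 (hωpos y).le
    rw [abs_le]
    constructor <;> simp only [hhdef] <;> linarith
  have hh_le : ∀ y, h y ≤ 0 := by
    intro y
    have h1 := (abs_le.1 (hgb y)).2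
    simp only [hhdef]; linarith
  have hh_usc : UpperSemicontinuous h := by
    have h1 : UpperSemicontinuous (fun y => δ (v y)) :=
      hδc.comp_upperSemicontinuous hvusc hδm
    have h2 : Continuous (fun y : X => -(Cg * ω y)) := (continuous_const.mul hωc).neg
    simpa [hhdef, sub_eq_add_neg] using h1.add h2.upperSemicontinuous
  obtain ⟨f, hfc, hfge, hfle, hftend⟩ := myosida_approx hh_usc hh_le
  -- measurability
  have hgm : Measurable fun y => δ (v y) := hδc.measurable.comp hv
  have hhm : Measurable h := hgm.sub ((continuous_const.mul hωc).measurable)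
  -- integrability
  have hωint : ∀ p ∈ D, Integrable ω (q p) := fun p hp => (hωq p hp).1
  have hgint : ∀ p ∈ D, Integrable (fun y => δ (v y)) (q p) := by
    intro p hp
    refine ((hωint p hp).const_mul Cg).mono' hgm.aestronglyMeasurable
      (ae_of_all _ fun y => ?_)
    rw [Real.norm_eq_abs]; exact hgb y
  have hhint : ∀ p ∈ D, Integrable h (q p) := by
    intro p hp
    refine ((hωint p hp).const_mul (2 * Cg)).mono' hhm.aestronglyMeasurable
      (ae_of_all _ fun y => ?_)
    rw [Real.norm_eq_abs]; exact hhb y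
  -- bound on the integral term
  have hIb : ∀ p ∈ D, |∫ y, δ (v y) ∂(q p)| ≤ Cg * (α * ω p.1) := by
    intro p hp
    calc |∫ y, δ (v y) ∂(q p)| ≤ ∫ y, |δ (v y)| ∂(q p) := by
          simpa [Real.norm_eq_abs] using
            norm_integral_le_integral_norm (μ := q p) (fun y => δ (v y))
      _ ≤ ∫ y, Cg * ω y ∂(q p) :=
          integral_mono (hgint p hp).abs ((hωint p hp).const_mul Cg) fun y => hgb y
      _ = Cg * ∫ y, ω y ∂(q p) := integral_const_mul _ _
      _ ≤ Cg * (α * ω p.1) := mul_le_mul_of_nonneg_left (hωq p hp).2 hCg0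
  set cS : ℝ := z + Cg * α with hcSdef
  have hcSpos : 0 < cS := by
    have : 0 ≤ Cg * α := mul_nonneg hCg0 hα.le
    simp only [hcSdef]; linarith
  have hSvb : ∀ p ∈ D, |u p + ∫ y, δ (v y) ∂(q p)| ≤ cS * ω p.1 := by
    intro p hp
    have h1 := huω p hp
    have h2 := hIb p hp
    have h3 := abs_add_le (u p) (∫ y, δ (v y) ∂(q p))
    have : Cg * (α * ω p.1) = Cg * α * ω p.1 := by ring
    simp only [hcSdef]
    calc |u p + ∫ y, δ (v y) ∂(q p)| ≤ |u p| + |∫ y, δ (v y) ∂(q p)| := h3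
      _ ≤ z * ω p.1 + Cg * α * ω p.1 := by linarith
      _ = (z + Cg * α) * ω p.1 := by ring
  -- upper semicontinuity of the integral term
  have hFcont : ∀ n : ℕ,
      ContinuousOn (fun p : X × A => ∫ y, max (f n y) (-(n:ℝ)) ∂(q p)) D := by
    intro n
    refine hqw _ ((hfc n).max continuous_const) ⟨(n:ℝ), fun y => ?_⟩
    rw [abs_le]
    refine ⟨neg_le_neg_iff.2 le_rfl |>.trans (le_max_right _ _) |>.trans' ?_, ?_⟩
    · exact le_rfl
    · exact max_le ((hfle n y).trans (Nat.cast_nonneg n)) (neg_le_self (Nat.cast_nonneg n))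
  have hψint : ∀ (n : ℕ) (p : X × A),
      Integrable (fun y => max (f n y) (-(n:ℝ))) (q p) := by
    intro n p
    refine (integrable_const (n:ℝ)).mono'
      ((hfc n).max continuous_const).measurable.aestronglyMeasurable
      (ae_of_all _ fun y => ?_)
    rw [Real.norm_eq_abs, abs_le]
    exact ⟨(neg_le_neg_iff.2 le_rfl).trans (le_max_right _ _),
      max_le ((hfle n y).trans (Nat.cast_nonneg n)) (neg_le_self (Nat.cast_nonneg n))⟩
  have hψtend : ∀ y : X,
      Tendsto (fun n => max (f n y) (-(n:ℝ))) atTop (𝓝 (h y)) := by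
    intro y
    refine (hftend y).congr' ?_
    filter_upwards [tendsto_natCast_atTop_atTop.eventually_ge_atTop (-(h y))] with n hn
    exact (max_eq_left (le_trans (by linarith) (hfge n y))).symm
  have hJleF : ∀ n : ℕ, ∀ p ∈ D,
      (∫ y, h y ∂(q p)) ≤ ∫ y, max (f n y) (-(n:ℝ)) ∂(q p) := by
    intro n p hp
    exact integral_mono (hhint p hp) (hψint n p)
      fun y => (hfge n y).trans (le_max_left _ _)
  have hJlim : ∀ p ∈ D,
      Tendsto (fun n => ∫ y, max (f n y) (-(n:ℝ)) ∂(q p)) atTop (𝓝 (∫ y, h y ∂(q p))) := by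
    intro p hp
    refine tendsto_integral_of_dominated_convergence (fun y => 2 * Cg * ω y)
      (fun n => ((hfc n).max continuous_const).measurable.aestronglyMeasurable)
      ((hωint p hp).const_mul (2 * Cg)) (fun n => ae_of_all _ fun y => ?_)
      (ae_of_all _ fun y => hψtend y)
    rw [Real.norm_eq_abs, abs_le]
    show -(2 * Cg * ω y) ≤ max (f n y) (-(n:ℝ)) ∧ max (f n y) (-(n:ℝ)) ≤ 2 * Cg * ω y
    have h1 := (abs_le.1 (hhb y)).1
    have h2 : max (f n y) (-(n:ℝ)) ≤ 0 :=
      max_le (hfle n y) (neg_nonpos.2 (Nat.cast_nonneg n))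
    have h3 : h y ≤ max (f n y) (-(n:ℝ)) := (hfge n y).trans (le_max_left _ _)
    have h4 : 0 ≤ 2 * Cg * ω y := by
      have := (hωpos y).le; positivity
    exact ⟨by linarith, by linarith⟩
  have hJusc : UpperSemicontinuousOn (fun p : X × A => ∫ y, h y ∂(q p)) D :=
    usc_of_approx hFcont hJleF hJlim
  have heqI : ∀ p ∈ D,
      (∫ y, δ (v y) ∂(q p)) = (∫ y, h y ∂(q p)) + Cg * ∫ y, ω y ∂(q p) := by
    intro p hp
    have h1 : (fun y => δ (v y)) = fun y => h y + Cg * ω y := by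
      funext y; simp only [hhdef]; ring
    rw [h1, integral_add (hhint p hp) ((hωint p hp).const_mul Cg), integral_const_mul]
  have hsumusc : UpperSemicontinuousOn
      (fun p : X × A => (∫ y, h y ∂(q p)) + Cg * ∫ y, ω y ∂(q p)) D :=
    hJusc.add ((continuousOn_const.mul hωqc).upperSemicontinuousOn)
  have hIusc : UpperSemicontinuousOn (fun p : X × A => ∫ y, δ (v y) ∂(q p)) D := by
    intro p hp yy hyy
    have hyy0 : (∫ y, δ (v y) ∂(q p)) < yy := hyy
    rw [heqI p hp] at hyy0
    filter_upwards [hsumusc p hp yy hyy0, self_mem_nhdsWithin] with r h1 h2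
    show (∫ y, δ (v y) ∂(q r)) < yy
    rw [heqI r h2]
    exact h1
  have hSvusc : UpperSemicontinuousOn
      (fun p : X × A => u p + ∫ y, δ (v y) ∂(q p)) D := huusc.add hIusc
  -- the value function
  set Sv : X × A → ℝ := fun p => u p + ∫ y, δ (v y) ∂(q p) with hSvdef
  have hsec : ∀ x : X, UpperSemicontinuousOn (fun a => Sv (x, a)) {a : A | (x, a) ∈ D} := by
    intro x a ha y hy
    have hev := hSvusc (x, a) ha y hy
    have hmap : Tendsto (fun b : A => (x, b)) (𝓝[{a : A | (x, a) ∈ D}] a) (𝓝[D] (x, a)) := by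
      refine ContinuousWithinAt.tendsto_nhdsWithin ?_ ?_
      · exact (continuous_const.prodMk continuous_id).continuousWithinAt
      · intro b hb; exact hb
    exact hmap.eventually hev
  have hmaxex : ∀ x : X, ∃ a : A, (x, a) ∈ D ∧ ∀ b : A, (x, b) ∈ D → Sv (x, b) ≤ Sv (x, a) := by
    intro x
    obtain ⟨a0, ha0⟩ := hDne x
    obtain ⟨a, ha, hmax⟩ := usc_exists_max (hAcomp x) ⟨a0, ha0⟩ (hsec x)
    exact ⟨a, ha, fun b hb => hmax b hb⟩
  choose sel hselD hselmax using hmaxex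
  refine ⟨⟨hSvusc, cS, hcSpos, hSvb⟩, fun x => Sv (x, sel x),
    fun x => ⟨sel x, hselD x, rfl, hselmax x⟩, ?_, cS, hcSpos, fun x => hSvb (x, sel x) (hselD x)⟩
  -- upper semicontinuity of Tv
  intro x₀ c hc
  have hrect : ∀ a ∈ {a : A | (x₀, a) ∈ D}, ∃ WV : Set X × Set A,
      IsOpen WV.1 ∧ x₀ ∈ WV.1 ∧ IsOpen WV.2 ∧ a ∈ WV.2 ∧
      ∀ p ∈ (WV.1 ×ˢ WV.2) ∩ D, Sv p < c := by
    intro a ha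
    have h1 : Sv (x₀, a) < c := lt_of_le_of_lt (hselmax x₀ a ha) hc
    have hev := hSvusc (x₀, a) ha c h1
    rw [eventually_nhdsWithin_iff] at hev
    rw [Filter.eventually_iff] at hev
    obtain ⟨W, V, hWo, hxW, hVo, haV, hsub⟩ := mem_nhds_prod_iff'.1 hev
    exact ⟨(W, V), hWo, hxW, hVo, haV, fun p hp => hsub hp.1 hp.2⟩
  choose WV hWo hxW hVo haV hlt using hrect
  obtain ⟨t, ht⟩ := (hAcomp x₀).elim_nhds_subcover' (fun a ha => (WV a ha).2)
    (fun a ha => (hVo a ha).mem_nhds (haV a ha))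
  set Vun : Set A := ⋃ a ∈ t, (WV a a.2).2 with hVundef
  have hVunopen : IsOpen Vun := isOpen_biUnion fun a _ => hVo a a.2
  have hWfin : (⋂ a ∈ t, (WV a a.2).1) ∈ 𝓝 x₀ :=
    (Filter.biInter_finset_mem t).2 fun a _ => (hWo a a.2).mem_nhds (hxW a a.2)
  have hO₂closed : IsClosed {x : X | ∃ a ∈ Vunᶜ, (x, a) ∈ D} :=
    hAusc Vunᶜ hVunopen.isClosed_compl
  have hx₀O₂ : x₀ ∈ {x : X | ∃ a ∈ Vunᶜ, (x, a) ∈ D}ᶜ := by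
    intro hcon
    obtain ⟨a, haV', haD⟩ := hcon
    exact haV' (ht haD)
  filter_upwards [hWfin, hO₂closed.isOpen_compl.mem_nhds hx₀O₂] with x hxWfin hxO₂
  -- the maximizer at x lies in Vun
  have hselV : sel x ∈ Vun := by
    by_contra hcon
    exact hxO₂ ⟨sel x, hcon, hselD x⟩
  rw [hVundef] at hselV
  simp only [Set.mem_iUnion] at hselV
  obtain ⟨a, hat, haV'⟩ := hselV
  have hxWa : x ∈ (WV a a.2).1 := by
    have := Set.mem_iInter₂.1 hxWfin a hat
    exact this
  exact hlt a a.2 (x, sel x) ⟨Set.mk_mem_prod hxWa haV', hselD x⟩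
end

section
/- Let X and A be Borel spaces, D a nonempty Borel subset of X×A with nonempty x-sections A(x), q a Borel measurable transition probability kernel from X×A to X, ω : X → [1,∞) Borel measurable, u : D → ℝ Borel measurable with |u(x,a)| ≤ zω(x) on D for some z > 0, and δ : ℝ → ℝ, γ : [0,∞) → [0,∞) such that: γ is increasing with γ(s) < s for s > 0; |δ(z₁) − δ(z₂)| ≤ γ(|z₁ − z₂|) for all reals; δ is increasing with δ(0) = 0; γ is subadditive and γ(ω(x)y) ≤ ω(x)γ(y) for x ∈ X, y > 0; ∫_X ω(y) q(dy|x,a) ≤ αω(x) on D with either α ≤ 1 or (α > 1 and αγ(s) < s for all s > 0). For a Borel measurable selector h (h : X → A with h(x) ∈ A(x)) let T_h v(x) = u(x,h(x)) + ∫_X δ(v(y)) q(dy|x,h(x)), and let v_h denote the unique Borel measurable fixed point of T_h with ‖v_h‖_ω < ∞. Let f and g be two Borel measurable selectors and let X₀ ⊂ X. If T_g v_f(x) > v_f(x) for all x ∈ X₀ and T_g v_f(x) = v_f(x) for all x ∉ X₀, then v_g(x) ≥ v_f(x) for all x ∈ X, and v_g(x) > v_f(x) for all x ∈ X₀. -/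
open MeasureTheory ProbabilityTheory

/-!
Comparison principle for `T_g`. Put `d = (v_f - v_g)⁺` and let `c` be its `ω`-weighted sup norm.
Since `v_f ≤ T_g v_f` and `v_g = T_g v_g`, monotonicity of `δ` and `|δ z₁ - δ z₂| ≤ γ |z₁ - z₂|`
give `v_f - v_g ≤ ∫ γ(d) dq ≤ γ(c) ∫ ω dq ≤ α γ(c) ω`, hence `c ≤ α γ(c)`, which forces `c = 0`
because `α γ(s) < s` for `s > 0`. Thus `v_f ≤ v_g`, and then `v_f < T_g v_f ≤ T_g v_g = v_g` on `X₀`.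
-/

section Comparison

variable {X : Type*} {ω : X → ℝ} {δ γ : ℝ → ℝ}

lemma sub_le_gamma_posPart (hδm : Monotone δ) (hδγ : ∀ z₁ z₂ : ℝ, |δ z₁ - δ z₂| ≤ γ |z₁ - z₂|)
    (hγ0 : 0 ≤ γ 0) (a b : ℝ) : δ a - δ b ≤ γ (a - b)⁺ := by
  rcases le_total a b with hab | hab
  · rw [posPart_eq_zero.mpr (sub_nonpos.mpr hab)]
    linarith [hδm hab]
  · rw [posPart_eq_self.mpr (sub_nonneg.mpr hab), ← abs_of_nonneg (sub_nonneg.mpr hab)]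
    exact (le_abs_self _).trans (hδγ a b)

lemma mul_gamma_lt_self {α s : ℝ} (hγ0 : ∀ s : ℝ, 0 ≤ s → 0 ≤ γ s)
    (hγlt : ∀ s : ℝ, 0 < s → γ s < s)
    (hαγ : α ≤ 1 ∨ (1 < α ∧ ∀ s : ℝ, 0 < s → α * γ s < s)) (hs : 0 < s) : α * γ s < s := by
  rcases hαγ with hα1 | ⟨-, hαγ⟩
  · calc α * γ s ≤ 1 * γ s := mul_le_mul_of_nonneg_right hα1 (hγ0 s hs.le)
      _ < s := by rw [one_mul]; exact hγlt s hs
  · exact hαγ s hs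

lemma gamma_le_mul_of_le_mul (hγm : MonotoneOn γ (Set.Ici 0))
    (hγω : ∀ x : X, ∀ y : ℝ, 0 < y → γ (ω x * y) ≤ ω x * γ y) {x : X} (hωx : 0 < ω x)
    {t c : ℝ} (ht : 0 ≤ t) (hc : 0 < c) (htc : t ≤ c * ω x) : γ t ≤ γ c * ω x :=
  calc γ t ≤ γ (ω x * c) := hγm ht (mul_nonneg hωx.le hc.le) (by rwa [mul_comm])
    _ ≤ ω x * γ c := hγω x c hc
    _ = γ c * ω x := mul_comm _ _

lemma le_iSup_div_mul {d : X → ℝ} (hω : ∀ x, 0 < ω x) {K : ℝ} (hdK : ∀ x, d x ≤ K * ω x)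
    (x : X) : d x ≤ (⨆ y, d y / ω y) * ω x := by
  rw [← div_le_iff₀ (hω x)]
  exact le_ciSup ⟨K, Set.forall_mem_range.2 fun y => (div_le_iff₀ (hω y)).2 (hdK y)⟩ x

lemma iSup_div_le {d : X → ℝ} (hω : ∀ x, 0 < ω x) {K : ℝ} (hK : 0 ≤ K)
    (hdK : ∀ x, d x ≤ K * ω x) : ⨆ y, d y / ω y ≤ K :=
  Real.iSup_le (fun x => (div_le_iff₀ (hω x)).2 (hdK x)) hK

variable [MeasurableSpace X]

/-- With `r x = u (x, g x)` and `μ x = q (x, g x)` this is the operator `T_g` of a selector `g`. -/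
noncomputable def bellmanOperator (r : X → ℝ) (μ : X → Measure X) (δ : ℝ → ℝ) (v : X → ℝ)
    (x : X) : ℝ :=
  r x + ∫ y, δ (v y) ∂μ x

lemma integrable_comp_of_abs_le_mul {μ : Measure X} {v : X → ℝ} {c : ℝ}
    (hω : ∀ x, 0 < ω x) (hωμ : Integrable ω μ) (hv : Measurable v)
    (hvc : ∀ x, |v x| ≤ c * ω x) (hδm : Monotone δ)
    (hδγ : ∀ z₁ z₂ : ℝ, |δ z₁ - δ z₂| ≤ γ |z₁ - z₂|) (hδ0 : δ 0 = 0)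
    (hγm : MonotoneOn γ (Set.Ici 0)) (hγω : ∀ x : X, ∀ y : ℝ, 0 < y → γ (ω x * y) ≤ ω x * γ y) :
    Integrable (fun y => δ (v y)) μ := by
  refine (hωμ.const_mul (γ (|c| + 1))).mono' (hδm.measurable.comp hv).aestronglyMeasurable
    (Filter.Eventually.of_forall fun y => ?_)
  have hδv : |δ (v y)| ≤ γ |v y| := by simpa [hδ0] using hδγ (v y) 0
  have hvy : |v y| ≤ (|c| + 1) * ω y :=
    (hvc y).trans (mul_le_mul_of_nonneg_right (by linarith [le_abs_self c]) (hω y).le)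
  exact hδv.trans (gamma_le_mul_of_le_mul hγm hγω (hω y) (abs_nonneg _) (by positivity) hvy)

variable {μ : X → Measure X} {r : X → ℝ} {α : ℝ} {v w : X → ℝ}

lemma sub_le_mul_gamma_of_posPart_le (hω : ∀ x, 0 < ω x)
    (hωμ : ∀ x, Integrable ω (μ x) ∧ ∫ y, ω y ∂μ x ≤ α * ω x)
    (hδm : Monotone δ) (hδγ : ∀ z₁ z₂ : ℝ, |δ z₁ - δ z₂| ≤ γ |z₁ - z₂|)
    (hγm : MonotoneOn γ (Set.Ici 0)) (hγ0 : ∀ s : ℝ, 0 ≤ s → 0 ≤ γ s)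
    (hγω : ∀ x : X, ∀ y : ℝ, 0 < y → γ (ω x * y) ≤ ω x * γ y)
    (hvi : ∀ x, Integrable (fun y => δ (v y)) (μ x))
    (hwi : ∀ x, Integrable (fun y => δ (w y)) (μ x))
    (hv : ∀ x, v x ≤ bellmanOperator r μ δ v x) (hw : ∀ x, bellmanOperator r μ δ w x = w x)
    {c : ℝ} (hc : 0 < c) (hvwc : ∀ x, (v x - w x)⁺ ≤ c * ω x) (x : X) :
    v x - w x ≤ α * γ c * ω x := by
  have hpt : ∀ y, δ (v y) - δ (w y) ≤ γ c * ω y := fun y =>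
    (sub_le_gamma_posPart hδm hδγ (hγ0 0 le_rfl) _ _).trans
      (gamma_le_mul_of_le_mul hγm hγω (hω y) (posPart_nonneg _) hc (hvwc y))
  have hvx := hv x
  have hwx := hw x
  unfold bellmanOperator at hvx hwx
  calc v x - w x ≤ ∫ y, δ (v y) ∂μ x - ∫ y, δ (w y) ∂μ x := by linarith
    _ = ∫ y, (δ (v y) - δ (w y)) ∂μ x := (integral_sub (hvi x) (hwi x)).symm
    _ ≤ ∫ y, γ c * ω y ∂μ x := integral_mono ((hvi x).sub (hwi x)) ((hωμ x).1.const_mul _) hpt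
    _ = γ c * ∫ y, ω y ∂μ x := integral_const_mul _ _
    _ ≤ γ c * (α * ω x) := mul_le_mul_of_nonneg_left (hωμ x).2 (hγ0 c hc.le)
    _ = α * γ c * ω x := by ring

theorem le_of_le_bellmanOperator (hω : ∀ x, 0 < ω x)
    (hωμ : ∀ x, Integrable ω (μ x) ∧ ∫ y, ω y ∂μ x ≤ α * ω x) (hα : 0 ≤ α)
    (hδm : Monotone δ) (hδγ : ∀ z₁ z₂ : ℝ, |δ z₁ - δ z₂| ≤ γ |z₁ - z₂|)
    (hγm : MonotoneOn γ (Set.Ici 0)) (hγ0 : ∀ s : ℝ, 0 ≤ s → 0 ≤ γ s)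
    (hγlt : ∀ s : ℝ, 0 < s → γ s < s) (hγω : ∀ x : X, ∀ y : ℝ, 0 < y → γ (ω x * y) ≤ ω x * γ y)
    (hαγ : α ≤ 1 ∨ (1 < α ∧ ∀ s : ℝ, 0 < s → α * γ s < s))
    (hvi : ∀ x, Integrable (fun y => δ (v y)) (μ x))
    (hwi : ∀ x, Integrable (fun y => δ (w y)) (μ x))
    {cv cw : ℝ} (hcv : ∀ x, |v x| ≤ cv * ω x) (hcw : ∀ x, |w x| ≤ cw * ω x)
    (hv : ∀ x, v x ≤ bellmanOperator r μ δ v x) (hw : ∀ x, bellmanOperator r μ δ w x = w x)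
    (x : X) : v x ≤ w x := by
  set c := ⨆ y, (v y - w y)⁺ / ω y
  have hvwc : ∀ y, (v y - w y)⁺ ≤ c * ω y := le_iSup_div_mul hω (K := cv + cw) fun y =>
    sup_le (by linarith [le_abs_self (v y), neg_abs_le (w y), hcv y, hcw y])
      (by linarith [abs_nonneg (v y), abs_nonneg (w y), hcv y, hcw y])
  have hc : c ≤ 0 := by
    by_contra! hcpos
    have hαγc : 0 ≤ α * γ c := mul_nonneg hα (hγ0 c hcpos.le)
    refine (mul_gamma_lt_self hγ0 hγlt hαγ hcpos).not_ge (iSup_div_le hω hαγc fun y => ?_)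
    exact sup_le (sub_le_mul_gamma_of_posPart_le hω hωμ hδm hδγ hγm hγ0 hγω hvi hwi hv hw hcpos
      hvwc y) (mul_nonneg hαγc (hω y).le)
  linarith [le_posPart (v x - w x), hvwc x, mul_nonpos_of_nonpos_of_nonneg hc (hω x).le]

theorem bellmanOperator_le_of_le_bellmanOperator (hω : ∀ x, 0 < ω x)
    (hωμ : ∀ x, Integrable ω (μ x) ∧ ∫ y, ω y ∂μ x ≤ α * ω x) (hα : 0 ≤ α)
    (hδm : Monotone δ) (hδγ : ∀ z₁ z₂ : ℝ, |δ z₁ - δ z₂| ≤ γ |z₁ - z₂|) (hδ0 : δ 0 = 0)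
    (hγm : MonotoneOn γ (Set.Ici 0)) (hγ0 : ∀ s : ℝ, 0 ≤ s → 0 ≤ γ s)
    (hγlt : ∀ s : ℝ, 0 < s → γ s < s) (hγω : ∀ x : X, ∀ y : ℝ, 0 < y → γ (ω x * y) ≤ ω x * γ y)
    (hαγ : α ≤ 1 ∨ (1 < α ∧ ∀ s : ℝ, 0 < s → α * γ s < s))
    (hvm : Measurable v) (hvb : ∃ c : ℝ, ∀ x, |v x| ≤ c * ω x)
    (hwm : Measurable w) (hwb : ∃ c : ℝ, ∀ x, |w x| ≤ c * ω x)
    (hv : ∀ x, v x ≤ bellmanOperator r μ δ v x) (hw : ∀ x, bellmanOperator r μ δ w x = w x)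
    (x : X) : bellmanOperator r μ δ v x ≤ w x := by
  obtain ⟨cv, hcv⟩ := hvb
  obtain ⟨cw, hcw⟩ := hwb
  have hvi : ∀ x, Integrable (fun y => δ (v y)) (μ x) := fun x =>
    integrable_comp_of_abs_le_mul hω (hωμ x).1 hvm hcv hδm hδγ hδ0 hγm hγω
  have hwi : ∀ x, Integrable (fun y => δ (w y)) (μ x) := fun x =>
    integrable_comp_of_abs_le_mul hω (hωμ x).1 hwm hcw hδm hδγ hδ0 hγm hγω
  have hvw := le_of_le_bellmanOperator hω hωμ hα hδm hδγ hγm hγ0 hγlt hγω hαγ hvi hwi hcv hcw hv hw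
  calc bellmanOperator r μ δ v x ≤ bellmanOperator r μ δ w x :=
        add_le_add_right (integral_mono (hvi x) (hwi x) fun y => hδm (hvw y)) _
    _ = w x := hw x

end Comparison

theorem howard_policy_improvement_general
    {X A : Type*}
    [MeasurableSpace X] [MeasurableSpace A]
    (D : Set (X × A))
    (q : Kernel (X × A) X)
    (ω : X → ℝ) (hω1 : ∀ x, 1 ≤ ω x)
    (u : X × A → ℝ)
    (δ : ℝ → ℝ) (γ : ℝ → ℝ)
    (hγm : MonotoneOn γ (Set.Ici 0)) (hγ0 : ∀ s : ℝ, 0 ≤ s → 0 ≤ γ s)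
    (hγlt : ∀ s : ℝ, 0 < s → γ s < s)
    (hδγ : ∀ z₁ z₂ : ℝ, |δ z₁ - δ z₂| ≤ γ |z₁ - z₂|)
    (hδm : Monotone δ) (hδ0 : δ 0 = 0)
    (hγω : ∀ x : X, ∀ y : ℝ, 0 < y → γ (ω x * y) ≤ ω x * γ y)
    (α : ℝ) (hα : 0 < α)
    (hωq : ∀ p ∈ D, Integrable ω (q p) ∧ ∫ y, ω y ∂(q p) ≤ α * ω p.1)
    (hαcase : α ≤ 1 ∨ (1 < α ∧ ∀ s : ℝ, 0 < s → α * γ s < s))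
    (g : X → A) (hgD : ∀ x, (x, g x) ∈ D)
    (vf : X → ℝ) (hvf : Measurable vf) (hvfb : ∃ c : ℝ, ∀ x, |vf x| ≤ c * ω x)
    (vg : X → ℝ) (hvg : Measurable vg) (hvgb : ∃ c : ℝ, ∀ x, |vg x| ≤ c * ω x)
    (hvgfix : ∀ x, u (x, g x) + ∫ y, δ (vg y) ∂(q (x, g x)) = vg x)
    (X₀ : Set X)
    (himp : ∀ x ∈ X₀, vf x < u (x, g x) + ∫ y, δ (vf y) ∂(q (x, g x)))
    (heq : ∀ x ∉ X₀, u (x, g x) + ∫ y, δ (vf y) ∂(q (x, g x)) = vf x) :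
    (∀ x, vf x ≤ vg x) ∧ ∀ x ∈ X₀, vf x < vg x := by
  have hω : ∀ x, 0 < ω x := fun x => one_pos.trans_le (hω1 x)
  have hvf_le : ∀ x, vf x ≤ u (x, g x) + ∫ y, δ (vf y) ∂(q (x, g x)) := fun x => by
    by_cases hx : x ∈ X₀
    exacts [(himp x hx).le, (heq x hx).ge]
  have hTg : ∀ x, u (x, g x) + ∫ y, δ (vf y) ∂(q (x, g x)) ≤ vg x :=
    bellmanOperator_le_of_le_bellmanOperator (r := fun x => u (x, g x))
      (μ := fun x => q (x, g x)) hω (fun x => hωq _ (hgD x)) hα.le hδm hδγ hδ0 hγm hγ0 hγlt hγω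
      hαcase hvf hvfb hvg hvgb hvf_le hvgfix
  exact ⟨fun x => (hvf_le x).trans (hTg x), fun x hx => (himp x hx).trans_le (hTg x)⟩

/-- Howard's policy improvement step (Theorem 4(a) of the paper): if `g` improves
`f` on `X₀` (i.e. `T_g v_f > v_f` on `X₀` and `T_g v_f = v_f` off `X₀`), then
`v_g ≥ v_f` everywhere and `v_g > v_f` on `X₀`. -/
theorem howard_policy_improvement
    {X A : Type*}
    [MetricSpace X] [SecondCountableTopology X] [MeasurableSpace X] [BorelSpace X] [Nonempty X]
    [MetricSpace A] [SecondCountableTopology A] [MeasurableSpace A] [BorelSpace A] [Nonempty A]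
    (D : Set (X × A)) (hD : MeasurableSet D) (hDne : ∀ x : X, ∃ a : A, (x, a) ∈ D)
    (q : Kernel (X × A) X) [IsMarkovKernel q]
    (ω : X → ℝ) (hωm : Measurable ω) (hω1 : ∀ x, 1 ≤ ω x)
    (u : X × A → ℝ) (hu : Measurable u)
    (z : ℝ) (hz : 0 < z) (huω : ∀ p ∈ D, |u p| ≤ z * ω p.1)
    (δ : ℝ → ℝ) (γ : ℝ → ℝ)
    (hγm : MonotoneOn γ (Set.Ici 0)) (hγ0 : ∀ s : ℝ, 0 ≤ s → 0 ≤ γ s)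
    (hγlt : ∀ s : ℝ, 0 < s → γ s < s)
    (hδγ : ∀ z₁ z₂ : ℝ, |δ z₁ - δ z₂| ≤ γ |z₁ - z₂|)
    (hδm : Monotone δ) (hδ0 : δ 0 = 0)
    (hγsub : ∀ y : ℝ, 0 ≤ y → ∀ s : ℝ, 0 ≤ s → γ (y + s) ≤ γ y + γ s)
    (hγω : ∀ x : X, ∀ y : ℝ, 0 < y → γ (ω x * y) ≤ ω x * γ y)
    (α : ℝ) (hα : 0 < α)
    (hωq : ∀ p ∈ D, Integrable ω (q p) ∧ ∫ y, ω y ∂(q p) ≤ α * ω p.1)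
    (hαcase : α ≤ 1 ∨ (1 < α ∧ ∀ s : ℝ, 0 < s → α * γ s < s))
    (f g : X → A) (hf : Measurable f) (hfD : ∀ x, (x, f x) ∈ D)
    (hg : Measurable g) (hgD : ∀ x, (x, g x) ∈ D)
    (vf : X → ℝ) (hvf : Measurable vf) (hvfb : ∃ c : ℝ, ∀ x, |vf x| ≤ c * ω x)
    (hvffix : ∀ x, u (x, f x) + ∫ y, δ (vf y) ∂(q (x, f x)) = vf x)
    (vg : X → ℝ) (hvg : Measurable vg) (hvgb : ∃ c : ℝ, ∀ x, |vg x| ≤ c * ω x)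
    (hvgfix : ∀ x, u (x, g x) + ∫ y, δ (vg y) ∂(q (x, g x)) = vg x)
    (X₀ : Set X)
    (himp : ∀ x ∈ X₀, vf x < u (x, g x) + ∫ y, δ (vf y) ∂(q (x, g x)))
    (heq : ∀ x ∉ X₀, u (x, g x) + ∫ y, δ (vf y) ∂(q (x, g x)) = vf x) :
    (∀ x, vf x ≤ vg x) ∧ ∀ x ∈ X₀, vf x < vg x :=
  howard_policy_improvement_general D q ω hω1 u δ γ hγm hγ0 hγlt hδγ hδm hδ0 hγω α hα hωq hαcase g
    hgD vf hvf hvfb vg hvg hvgb hvgfix X₀ himp heq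
end

section
/- Let X and A be Borel spaces, D a nonempty Borel subset of X×A with nonempty x-sections A(x), q a Borel measurable transition probability kernel from X×A to X, ω : X → [1,∞), u : D → ℝ with −bω(x) ≤ u(x,a) ≤ cω(x) on D for some b, c > 0, and δ : ℝ → ℝ, γ : [0,∞) → [0,∞) such that: γ is increasing with γ(s) < s for s > 0; |δ(z₁) − δ(z₂)| ≤ γ(|z₁ − z₂|) for all reals; δ is increasing with δ(0) = 0; γ is subadditive and γ(ω(x)y) ≤ ω(x)γ(y) for x ∈ X, y > 0; ∫_X ω(y) q(dy|x,a) ≤ αω(x) on D with either α ≤ 1 or (α > 1 and αγ(s) < s for all s > 0). Assume (W): each A(x) is compact and x ↦ A(x) is upper semicontinuous; u is upper semicontinuous on D; q is weakly continuous; ω is continuous; (x,a) ↦ ∫_X ω(y) q(dy|x,a) is continuous on D. Let Tv(x) = max_{a∈A(x)} [u(x,a) + ∫_X δ(v(y)) q(dy|x,a)], let v* be the unique fixed point of T among Borel measurable functions with sup_x |v(x)|/ω(x) < ∞, set V₀ = 𝟎 and V_n = T V_{n−1}, and define A_n*(x) = Argmax_{a∈A(x)} (u(x,a) + ∫_X δ(V_{n−1}(y))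 q(dy|x,a)) and A*(x) = Argmax_{a∈A(x)} (u(x,a) + ∫_X δ(v*(y)) q(dy|x,a)). Then for every x ∈ X the upper limit Ls A_n*(x) — the set of all accumulation points of sequences (a_n) with a_n ∈ A_n*(x) for all n — is nonempty and satisfies Ls A_n*(x) ⊂ A*(x). -/
/-!
Value iteration preserves upper semicontinuity: if `v` is upper semicontinuous and
`ω`-bounded, then upper semicontinuity of `u`, weak continuity of `q` and continuity of
`(x, a) ↦ ∫ ω dq(x, a)` make `(x, a) ↦ u(x, a) + ∫ δ(v) dq(x, a)` upper semicontinuous on `D`,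
and Berge's maximum theorem makes `Tv` upper semicontinuous. The modulus `γ` turns
`|v - v*| ≤ e ω` into `|Tv - v*| ≤ α γ(e) ω`, so `|V_n - v*| ≤ e_n ω` with `e_{n+1} = α γ(e_n)`,
and `e_n → 0` because `s ↦ α γ(s)` is upper semicontinuous and below the identity.
Consequently, for fixed `x`, the functions maximised in `A_n*(x)` converge uniformly on the
compact set `A(x)` to the one maximised in `A*(x)`. Compactness gives cluster points of
maximisers, and a cluster point of maximisers of uniformly convergent upper semicontinuous
functions maximises the limit.
-/

open MeasureTheory ProbabilityTheory Filter Topology Set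

section Topology

variable {α β ι : Type*} [TopologicalSpace α] [TopologicalSpace β]

lemma upperHemicontinuous_of_isClosed {F : α → Set β}
    (hF : ∀ K : Set β, IsClosed K → IsClosed {x | ∃ b ∈ K, b ∈ F x}) :
    UpperHemicontinuous F := by
  refine upperHemicontinuous_iff_isClosed_compl_preimage_Iic_compl.2 fun K hK => ?_
  convert hF K hK using 1
  ext x
  simp [Set.not_subset, and_comm]

lemma UpperHemicontinuousAt.exists_mapClusterPt {F : α → Set β} {x₀ : α}
    (hF : UpperHemicontinuousAt F x₀) (hc : IsCompact (F x₀)) {l : Filter ι} [l.NeBot]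
    {x : ι → α} {y : ι → β} (hx : Tendsto x l (𝓝 x₀)) (hy : ∀ᶠ i in l, y i ∈ F (x i)) :
    ∃ b ∈ F x₀, MapClusterPt b l y := by
  have hy_nhdsSet : Tendsto y l (𝓝ˢ (F x₀)) := by
    refine (hasBasis_nhdsSet _).tendsto_right_iff.2 fun U ⟨hU, hFU⟩ => ?_
    filter_upwards [hx.eventually (hF.forall_isOpen U hU hFU), hy] with i hi hyi using hi hyi
  by_contra! h
  have hdisj : Disjoint (𝓝ˢ (F x₀)) (map y l) :=
    hc.disjoint_nhdsSet_left.2 fun b hb => not_not.1 (clusterPt_iff_not_disjoint.not.1 (h b hb))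
  exact (map_neBot (f := l) (m := y)).ne (disjoint_self.1 (hdisj.mono_left hy_nhdsSet))

lemma UpperSemicontinuousOn.comp_prodMk {G : α × β → ℝ} {D : Set (α × β)}
    (hG : UpperSemicontinuousOn G D) (x : α) :
    UpperSemicontinuousOn (fun b => G (x, b)) {b | (x, b) ∈ D} :=
  hG.comp (continuous_const.prodMk continuous_id).continuousOn fun _ hb => hb

/-- The upper half of Berge's maximum theorem. -/
lemma upperSemicontinuous_sSup_image {F : α → Set β} (hF : UpperHemicontinuous F)
    (hFc : ∀ x, IsCompact (F x)) (hFne : ∀ x, (F x).Nonempty) {G : α × β → ℝ}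
    (hG : UpperSemicontinuousOn G {p | p.2 ∈ F p.1}) :
    UpperSemicontinuous fun x => sSup ((fun b => G (x, b)) '' F x) := by
  choose σ hσ hσmax using fun x => (hG.comp_prodMk x).exists_isMaxOn (hFne x) (hFc x)
  have hvalue (x : α) : sSup ((fun b => G (x, b)) '' F x) = G (x, σ x) := by
    rw [sSup_image', (hσmax x).iSup_eq (hσ x)]
  simp_rw [hvalue]
  intro x₀ t ht
  by_contra hfreq
  set l := 𝓝 x₀ ⊓ 𝓟 {x | t ≤ G (x, σ x)}
  have : l.NeBot := by simpa [l, not_eventually, ← frequently_iff_neBot] using hfreq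
  obtain ⟨b, hb, hbσ⟩ := (hF.upperHemicontinuousAt x₀).exists_mapClusterPt (hFc x₀) (l := l)
    (x := id) inf_le_left (Eventually.of_forall hσ)
  have hGb : G (x₀, b) < t := (hσmax x₀ hb).trans_lt ht
  obtain ⟨P, hP, Q, hQ, hPQ⟩ := eventually_prod_iff.1 <| by
    simpa [nhds_prod_eq, eventually_nhdsWithin_iff] using hG (x₀, b) hb t hGb
  have hl : ∀ᶠ x in l, P x ∧ t ≤ G (x, σ x) :=
    (hP.filter_mono inf_le_left).and (mem_inf_of_right (mem_principal_self _))
  obtain ⟨x, hxQ, hxP, hxt⟩ := ((hbσ.frequently hQ).and_eventually hl).exists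
  exact (hPQ hxP hxQ (hσ x)).not_ge hxt

lemma MapClusterPt.isMaxOn_of_tendstoUniformlyOn {S : Set β} {l : Filter ι}
    {F : ι → β → ℝ} {f : β → ℝ} (hF : ∀ i, UpperSemicontinuousOn (F i) S)
    (hFf : TendstoUniformlyOn F f l S) {a : ι → β} (ha : ∀ i, a i ∈ S)
    (hmax : ∀ i, IsMaxOn (F i) S (a i)) {a₀ : β} (h : MapClusterPt a₀ l a) (ha₀ : a₀ ∈ S) :
    IsMaxOn f S a₀ := by
  intro b hb
  refine (le_of_forall_pos_lt_add fun ε hε => ?_ : f b ≤ f a₀)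
  have hunif : ∀ᶠ i in l, ∀ x ∈ S, |f x - F i x| < ε / 5 := by
    simpa only [Real.dist_eq] using Metric.tendstoUniformlyOn_iff.1 hFf (ε / 5) (by positivity)
  have : l.NeBot := (h.neBot.mono inf_le_right).of_map
  obtain ⟨m, hm⟩ := hunif.exists
  have hnear : ∀ᶠ x in 𝓝 a₀, x ∈ S → F m x < F m a₀ + ε / 5 :=
    eventually_nhdsWithin_iff.1 (hF m a₀ ha₀ _ (by linarith))
  obtain ⟨i, hi_near, hi⟩ := ((h.frequently hnear).and_eventually hunif).exists
  have h₁ := abs_lt.1 (hi b hb)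
  have h₂ := abs_lt.1 (hi (a i) (ha i))
  have h₃ := abs_lt.1 (hm (a i) (ha i))
  have h₄ := abs_lt.1 (hm a₀ ha₀)
  have h₅ : F i b ≤ F i (a i) := hmax i hb
  -- f b < F i b + ε/5 ≤ F i (a i) + ε/5 < f (a i) + 2ε/5 < F m (a i) + 3ε/5 < F m a₀ + 4ε/5
  -- < f a₀ + ε
  linarith [hi_near (ha i)]

lemma IsCompact.exists_mapClusterPt_isMaxOn {S : Set β} (hS : IsCompact S) (hne : S.Nonempty)
    {F : ι → β → ℝ} (hF : ∀ i, UpperSemicontinuousOn (F i) S) (l : Filter ι) [l.NeBot] :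
    ∃ a₀, ∃ a : ι → β, (∀ i, a i ∈ S ∧ IsMaxOn (F i) S (a i)) ∧ MapClusterPt a₀ l a := by
  choose a ha hmax using fun i => (hF i).exists_isMaxOn hne hS
  obtain ⟨a₀, -, h⟩ :=
    hS.exists_mapClusterPt_of_frequently (Eventually.of_forall (f := l) ha).frequently
  exact ⟨a₀, a, fun i => ⟨ha i, hmax i⟩, h⟩

end Topology

lemma tendstoUniformlyOn_of_abs_sub_le {β ι : Type*} {l : Filter ι} {S : Set β}
    {F : ι → β → ℝ} {f : β → ℝ} {r : ι → ℝ} (hr : Tendsto r l (𝓝 0))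
    (h : ∀ i, ∀ b ∈ S, |F i b - f b| ≤ r i) :
    TendstoUniformlyOn F f l S :=
  Metric.tendstoUniformlyOn_iff.2 fun ε hε => (hr.eventually (gt_mem_nhds hε)).mono
    fun i hi b hb => by rw [dist_comm, Real.dist_eq]; exact (h i b hb).trans_lt hi

lemma MonotoneOn.le_self_of_forall_pos_lt {γ : ℝ → ℝ} (hγm : MonotoneOn γ (Ici 0))
    (hlt : ∀ s, 0 < s → γ s < s) {s : ℝ} (hs : 0 ≤ s) : γ s ≤ s := by
  rcases hs.eq_or_lt with rfl | hs
  · exact le_of_forall_pos_lt_add fun ε hε => by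
      simpa using (hγm (mem_Ici.2 le_rfl) (mem_Ici.2 hε.le) hε.le).trans_lt (hlt ε hε)
  · exact (hlt s hs).le

lemma MonotoneOn.upperSemicontinuousOn_of_subadditive {γ : ℝ → ℝ} (hγm : MonotoneOn γ (Ici 0))
    (hsub : ∀ s, 0 ≤ s → ∀ t, 0 ≤ t → γ (s + t) ≤ γ s + γ t) (hle : ∀ s, 0 ≤ s → γ s ≤ s) :
    UpperSemicontinuousOn γ (Ici 0) := by
  intro s hs y hy
  have hright : ∀ᶠ s' in 𝓝[Ici 0] s, s' < s + (y - γ s) :=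
    nhdsWithin_le_nhds (Iio_mem_nhds (by linarith))
  filter_upwards [hright, self_mem_nhdsWithin] with s' hs' hs'₀
  rcases le_total s' s with h | h
  · exact (hγm hs'₀ hs h).trans_lt hy
  · have := hsub s hs (s' - s) (sub_nonneg.2 h)
    rw [add_sub_cancel] at this
    linarith [hle (s' - s) (sub_nonneg.2 h)]

lemma tendsto_iterate_nhds_zero {φ : ℝ → ℝ} (hφ : UpperSemicontinuousOn φ (Ici 0))
    (hφ_nonneg : MapsTo φ (Ici 0) (Ici 0)) (hφ0 : φ 0 = 0) (hφlt : ∀ s, 0 < s → φ s < s)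
    {s₀ : ℝ} (hs₀ : 0 ≤ s₀) : Tendsto (fun n => φ^[n] s₀) atTop (𝓝 0) := by
  have hle (s : ℝ) (hs : 0 ≤ s) : φ s ≤ s := by
    rcases hs.eq_or_lt with rfl | hs
    exacts [hφ0.le, (hφlt s hs).le]
  have hsucc (n : ℕ) : φ^[n + 1] s₀ = φ (φ^[n] s₀) := Function.iterate_succ_apply' φ n s₀
  have hnonneg (n : ℕ) : 0 ≤ φ^[n] s₀ := by
    induction n with
    | zero => exact hs₀
    | succ n ih => rw [hsucc]; exact hφ_nonneg ih
  have hanti : Antitone fun n => φ^[n] s₀ :=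
    antitone_nat_of_succ_le fun n => by rw [hsucc]; exact hle _ (hnonneg n)
  have hlim := tendsto_atTop_ciInf hanti ⟨0, by rintro _ ⟨n, rfl⟩; exact hnonneg n⟩
  set L := ⨅ n, φ^[n] s₀
  have hL : 0 ≤ L := ge_of_tendsto' hlim hnonneg
  rcases hL.eq_or_lt with hL0 | hLpos
  · rwa [hL0]
  have hbelow : ∀ᶠ n in atTop, φ (φ^[n] s₀) < L :=
    (tendsto_nhdsWithin_iff.2 ⟨hlim, Eventually.of_forall hnonneg⟩).eventually
      (hφ L hL L (hφlt L hLpos))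
  obtain ⟨n, hn⟩ := hbelow.exists
  exact absurd (hanti.le_of_tendsto hlim (n + 1)) (by rw [hsucc]; exact hn.not_ge)

lemma tendsto_iterate_mul_nhds_zero {γ : ℝ → ℝ} (hγm : MonotoneOn γ (Ici 0))
    (hγ0 : ∀ s, 0 ≤ s → 0 ≤ γ s) (hγle : ∀ s, 0 ≤ s → γ s ≤ s)
    (hγsub : ∀ s, 0 ≤ s → ∀ t, 0 ≤ t → γ (s + t) ≤ γ s + γ t) {α : ℝ} (hα : 0 ≤ α)
    (hαγ : ∀ s, 0 < s → α * γ s < s) {s₀ : ℝ} (hs₀ : 0 ≤ s₀) :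
    Tendsto (fun n => (fun s => α * γ s)^[n] s₀) atTop (𝓝 0) :=
  tendsto_iterate_nhds_zero ((continuous_const_mul α).comp_upperSemicontinuousOn
      (hγm.upperSemicontinuousOn_of_subadditive hγsub hγle) (monotone_mul_left_of_nonneg hα))
    (fun s hs => mul_nonneg hα (hγ0 s hs))
    (by simp [le_antisymm (hγle 0 le_rfl) (hγ0 0 le_rfl)]) hαγ hs₀

section Approximation

variable {Y : Type*} [PseudoMetricSpace Y]

lemma UpperSemicontinuousAt.eventually_ciSup_sub_mul_dist_lt {f : Y → ℝ} {y : Y}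
    (hf : UpperSemicontinuousAt f y) {B : ℝ} (hB : ∀ z, |f z| ≤ B) {t : ℝ} (ht : f y < t) :
    ∀ᶠ n : ℕ in atTop, ⨆ z, (f z - n * dist y z) < t := by
  have : Nonempty Y := ⟨y⟩
  obtain ⟨r, hr, hnear⟩ := Metric.eventually_nhds_iff.1 (hf ((f y + t) / 2) (by linarith))
  obtain ⟨N, hN⟩ := exists_nat_ge (2 * B / r)
  filter_upwards [eventually_ge_atTop N] with n hn
  refine (ciSup_le fun z => ?_).trans_lt (show (f y + t) / 2 < t by linarith)
  rcases lt_or_ge (dist z y) r with hz | hz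
  · have : 0 ≤ (n : ℝ) * dist y z := by positivity
    linarith [hnear hz]
  · have hnr : 2 * B ≤ n * r := by
      rw [div_le_iff₀ hr] at hN
      nlinarith [(Nat.cast_le.2 hn : (N : ℝ) ≤ n)]
    have : (n : ℝ) * r ≤ n * dist y z := by rw [dist_comm]; gcongr
    linarith [(abs_le.1 (hB z)).2, (abs_le.1 (hB y)).1]

lemma UpperSemicontinuous.exists_continuous_ge_tendsto {f : Y → ℝ} (hf : UpperSemicontinuous f)
    {B : ℝ} (hB : ∀ y, |f y| ≤ B) :
    ∃ F : ℕ → Y → ℝ, (∀ n, Continuous (F n)) ∧ (∀ n y, f y ≤ F n y ∧ |F n y| ≤ B) ∧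
      ∀ y, Tendsto (fun n => F n y) atTop (𝓝 (f y)) := by
  set F : ℕ → Y → ℝ := fun n y => ⨆ z, (f z - n * dist y z)
  have hterm_le (n : ℕ) (y z : Y) : f z - n * dist y z ≤ B := by
    have : 0 ≤ (n : ℝ) * dist y z := by positivity
    linarith [(abs_le.1 (hB z)).2]
  have hbdd (n : ℕ) (y : Y) : BddAbove (range fun z => f z - n * dist y z) :=
    ⟨B, by rintro _ ⟨z, rfl⟩; exact hterm_le n y z⟩
  have hge (n : ℕ) (y : Y) : f y ≤ F n y := by simpa using le_ciSup (hbdd n y) y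
  have hle (n : ℕ) (y : Y) : F n y ≤ B :=
    have : Nonempty Y := ⟨y⟩
    ciSup_le (hterm_le n y)
  have hlip (n : ℕ) : LipschitzWith n (F n) := by
    refine LipschitzWith.of_le_add_mul _ fun y y' => ?_
    have : Nonempty Y := ⟨y⟩
    refine ciSup_le fun z => ?_
    have : (n : ℝ) * dist y' z ≤ n * dist y z + n * dist y y' := by
      rw [dist_comm y y', ← mul_add]; gcongr; exact (dist_triangle y' y z).trans_eq (add_comm _ _)
    simp only [NNReal.coe_natCast]
    linarith [le_ciSup (hbdd n y') z]
  refine ⟨F, fun n => (hlip n).continuous, fun n y => ⟨hge n y, abs_le.2 ⟨?_, hle n y⟩⟩,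
    fun y => tendsto_order.2 ⟨fun t ht => .of_forall fun n => ht.trans_le (hge n y),
      fun t ht => UpperSemicontinuousAt.eventually_ciSup_sub_mul_dist_lt (hf y) hB ht⟩⟩
  linarith [(abs_le.1 (hB y)).1, hge n y]

end Approximation

lemma exists_integral_truncation_lt {Y : Type*} [MeasurableSpace Y] {ν : Measure Y}
    {f w : Y → ℝ} (hf : Measurable f) (hw : Measurable w) (hwν : Integrable w ν)
    (hfw : ∀ y, |f y| ≤ w y) {t : ℝ} (ht : ∫ y, f y ∂ν < t) :
    ∃ M : ℕ, ∫ y, max (min (f y) M) (-M) ∂ν + ∫ y, (w y - min (w y) M) ∂ν < t := by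
  have heventually (y : Y) : ∀ᶠ M : ℕ in atTop,
      max (min (f y) M) (-M) = f y ∧ w y - min (w y) M = 0 := by
    obtain ⟨N, hN⟩ := exists_nat_ge (w y)
    filter_upwards [eventually_ge_atTop N] with M hM
    have : w y ≤ M := hN.trans (Nat.cast_le.2 hM)
    constructor <;> grind [abs_le]
  have hclamp : Tendsto (fun M : ℕ => ∫ y, max (min (f y) M) (-M) ∂ν) atTop
      (𝓝 (∫ y, f y ∂ν)) := by
    refine tendsto_integral_of_dominated_convergence w
      (fun M => ((hf.min measurable_const).max measurable_const).aestronglyMeasurable) hwν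
      (fun M => .of_forall fun y => ?_)
      (.of_forall fun y => tendsto_const_nhds.congr' ((heventually y).mono fun M hM => hM.1.symm))
    have : (0 : ℝ) ≤ M := M.cast_nonneg
    grind [abs_le, Real.norm_eq_abs]
  have htail : Tendsto (fun M : ℕ => ∫ y, (w y - min (w y) M) ∂ν) atTop (𝓝 0) := by
    simpa using tendsto_integral_of_dominated_convergence
      (F := fun (M : ℕ) y => w y - min (w y) M) (f := 0) w
      (fun M => (hw.sub (hw.min measurable_const)).aestronglyMeasurable) hwν
      (fun M => .of_forall fun y => by grind [abs_le, Real.norm_eq_abs])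
      (.of_forall fun y => tendsto_const_nhds.congr' ((heventually y).mono fun M hM => hM.2.symm))
  exact ((hclamp.add htail).eventually_lt_const (by simpa using ht)).exists

section WeakConvergence

variable {Y ι : Type*} [PseudoMetricSpace Y] [MeasurableSpace Y] [OpensMeasurableSpace Y]
  {l : Filter ι} {μ : ι → Measure Y} {ν : Measure Y}

lemma eventually_integral_lt_of_upperSemicontinuous_of_abs_le_const [∀ i, IsFiniteMeasure (μ i)]
    [IsFiniteMeasure ν]
    (hμν : ∀ φ : Y → ℝ, Continuous φ → (∃ C, ∀ y, |φ y| ≤ C) →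
      Tendsto (fun i => ∫ y, φ y ∂μ i) l (𝓝 (∫ y, φ y ∂ν)))
    {f : Y → ℝ} (hf : UpperSemicontinuous f) {B : ℝ} (hB : ∀ y, |f y| ≤ B)
    {t : ℝ} (ht : ∫ y, f y ∂ν < t) : ∀ᶠ i in l, ∫ y, f y ∂μ i < t := by
  obtain ⟨F, hFc, hfF, hF⟩ := hf.exists_continuous_ge_tendsto hB
  have hint {m : Measure Y} [IsFiniteMeasure m] {g : Y → ℝ} (hg : Measurable g)
      (hgB : ∀ y, |g y| ≤ B) : Integrable g m :=
    .of_bound hg.aestronglyMeasurable B (.of_forall hgB)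
  have hFν : Tendsto (fun n => ∫ y, F n y ∂ν) atTop (𝓝 (∫ y, f y ∂ν)) :=
    tendsto_integral_of_dominated_convergence (fun _ => B)
      (fun n => (hFc n).aestronglyMeasurable) (integrable_const B)
      (fun n => .of_forall fun y => (hfF n y).2) (.of_forall hF)
  obtain ⟨n, hn⟩ := (hFν.eventually_lt_const ht).exists
  filter_upwards [(hμν (F n) (hFc n) ⟨B, fun y => (hfF n y).2⟩).eventually_lt_const hn] with i hi
  refine lt_of_le_of_lt (integral_mono (hint hf.measurable hB)
    (hint (hFc n).measurable fun y => (hfF n y).2) fun y => (hfF n y).1) hi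

lemma eventually_integral_lt_of_upperSemicontinuous [∀ i, IsFiniteMeasure (μ i)]
    [IsFiniteMeasure ν]
    (hμν : ∀ φ : Y → ℝ, Continuous φ → (∃ C, ∀ y, |φ y| ≤ C) →
      Tendsto (fun i => ∫ y, φ y ∂μ i) l (𝓝 (∫ y, φ y ∂ν)))
    {w : Y → ℝ} (hw : Continuous w) (hwμ : ∀ᶠ i in l, Integrable w (μ i)) (hwν : Integrable w ν)
    (hμνw : Tendsto (fun i => ∫ y, w y ∂μ i) l (𝓝 (∫ y, w y ∂ν)))
    {f : Y → ℝ} (hf : UpperSemicontinuous f) (hfw : ∀ y, |f y| ≤ w y)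
    {t : ℝ} (ht : ∫ y, f y ∂ν < t) : ∀ᶠ i in l, ∫ y, f y ∂μ i < t := by
  -- `f ≤ clamp + tail`: weak convergence controls the bounded usc part `clamp`, and the
  -- convergence of `∫ w` controls the continuous part `tail`.
  obtain ⟨M, hM⟩ := exists_integral_truncation_lt hf.measurable hw.measurable hwν hfw ht
  set clamp : Y → ℝ := fun y => max (min (f y) M) (-M)
  set tail : Y → ℝ := fun y => w y - min (w y) M
  have hM0 : (0 : ℝ) ≤ M := M.cast_nonneg
  have hclamp_usc : UpperSemicontinuous clamp :=
    (hf.inf upperSemicontinuous_const).sup upperSemicontinuous_const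
  have hclamp_abs (y : Y) : |clamp y| ≤ M := by grind [abs_le]
  have hmin_abs (y : Y) : |min (w y) M| ≤ M := by grind [abs_le]
  have hmin_int {m : Measure Y} [IsFiniteMeasure m] : Integrable (fun y => min (w y) M) m :=
    .of_bound (hw.min continuous_const).aestronglyMeasurable M (.of_forall hmin_abs)
  set ε := (t - (∫ y, clamp y ∂ν + ∫ y, tail y ∂ν)) / 2 with hε_def
  have hclamp : ∀ᶠ i in l, ∫ y, clamp y ∂μ i < ∫ y, clamp y ∂ν + ε :=
    eventually_integral_lt_of_upperSemicontinuous_of_abs_le_const hμν hclamp_usc hclamp_abs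
      (by linarith)
  have htail : ∀ᶠ i in l, ∫ y, tail y ∂μ i < ∫ y, tail y ∂ν + ε := by
    have hlim := hμνw.sub (hμν _ (hw.min continuous_const) ⟨M, hmin_abs⟩)
    rw [← integral_sub hwν hmin_int] at hlim
    refine (hlim.congr' ?_).eventually_lt_const (by linarith)
    filter_upwards [hwμ] with i hwi using (integral_sub hwi hmin_int).symm
  filter_upwards [hclamp, htail, hwμ] with i hi₁ hi₂ hwi
  have hclamp_int : Integrable clamp (μ i) :=
    .of_bound hclamp_usc.measurable.aestronglyMeasurable M (.of_forall hclamp_abs)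
  have htail_int : Integrable tail (μ i) := hwi.sub hmin_int
  calc ∫ y, f y ∂μ i ≤ ∫ y, clamp y + tail y ∂μ i :=
        integral_mono (hwi.mono' hf.measurable.aestronglyMeasurable (.of_forall hfw))
          (hclamp_int.add htail_int) fun y => by grind [abs_le]
    _ = ∫ y, clamp y ∂μ i + ∫ y, tail y ∂μ i := integral_add hclamp_int htail_int
    _ < t := by linarith

end WeakConvergence

lemma upperSemicontinuousOn_integral_kernel {Z Y : Type*} [TopologicalSpace Z] [MeasurableSpace Z]
    [PseudoMetricSpace Y] [MeasurableSpace Y] [OpensMeasurableSpace Y]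
    {κ : Kernel Z Y} [IsFiniteKernel κ] {D : Set Z}
    (hκ : ∀ φ : Y → ℝ, Continuous φ → (∃ C : ℝ, ∀ y, |φ y| ≤ C) →
      ContinuousOn (fun p => ∫ y, φ y ∂(κ p)) D)
    {w : Y → ℝ} (hw : Continuous w) (hwκ : ∀ p ∈ D, Integrable w (κ p))
    (hκw : ContinuousOn (fun p => ∫ y, w y ∂(κ p)) D)
    {f : Y → ℝ} (hf : UpperSemicontinuous f) (hfw : ∀ y, |f y| ≤ w y) :
    UpperSemicontinuousOn (fun p => ∫ y, f y ∂(κ p)) D := fun p hp _ ht =>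
  eventually_integral_lt_of_upperSemicontinuous (fun φ hφ hφC => hκ φ hφ hφC p hp) hw
    (eventually_nhdsWithin_of_forall hwκ) (hwκ p hp) (hκw p hp) hf hfw ht

lemma abs_csSup_image_sub_le {β : Type*} {s : Set β} {f g : β → ℝ} (hs : s.Nonempty)
    (hf : BddAbove (f '' s)) {r : ℝ} (h : ∀ b ∈ s, |f b - g b| ≤ r) :
    |sSup (f '' s) - sSup (g '' s)| ≤ r := by
  have hfg (b : β) (hb : b ∈ s) := abs_le.1 (h b hb)
  have hg : BddAbove (g '' s) := ⟨sSup (f '' s) + r, by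
    rintro _ ⟨b, hb, rfl⟩
    linarith [(hfg b hb).1, le_csSup hf (mem_image_of_mem f hb)]⟩
  refine abs_le.2 ⟨?_, ?_⟩
  · have : sSup (g '' s) ≤ sSup (f '' s) + r := csSup_le (hs.image g) <| by
      rintro _ ⟨b, hb, rfl⟩
      linarith [(hfg b hb).1, le_csSup hf (mem_image_of_mem f hb)]
    linarith
  · have : sSup (f '' s) ≤ sSup (g '' s) + r := csSup_le (hs.image f) <| by
      rintro _ ⟨b, hb, rfl⟩
      linarith [(hfg b hb).2, le_csSup hg (mem_image_of_mem g hb)]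
    linarith

lemma abs_sub_le_mul_of_modulus {δ γ : ℝ → ℝ} (hδγ : ∀ z₁ z₂ : ℝ, |δ z₁ - δ z₂| ≤ γ |z₁ - z₂|)
    (hγm : MonotoneOn γ (Ici 0)) (hγ0 : γ 0 = 0) {w : ℝ} (hw : 0 ≤ w)
    (hγw : ∀ y : ℝ, 0 < y → γ (w * y) ≤ w * γ y) {s z₁ z₂ : ℝ} (hs : 0 ≤ s)
    (h : |z₁ - z₂| ≤ s * w) : |δ z₁ - δ z₂| ≤ γ s * w := by
  refine (hδγ z₁ z₂).trans
    ((hγm (mem_Ici.2 (abs_nonneg _)) (mem_Ici.2 (mul_nonneg hs hw)) h).trans ?_)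
  rcases hs.eq_or_lt with rfl | hs
  · simp [hγ0]
  · simpa only [mul_comm] using hγw s hs

section Bellman

variable {X A : Type*} [MeasurableSpace X] [MeasurableSpace A]
  {q : Kernel (X × A) X} {D : Set (X × A)} {u : X × A → ℝ} {δ : ℝ → ℝ} {ω : X → ℝ}

noncomputable def actionValue (q : Kernel (X × A) X) (u : X × A → ℝ) (δ : ℝ → ℝ) (v : X → ℝ)
    (p : X × A) : ℝ :=
  u p + ∫ y, δ (v y) ∂(q p)

lemma integrable_comp_of_abs_le_mul_s18 {μ : Measure X} (hω : Integrable ω μ) (hδc : Continuous δ)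
    (hδ_abs : ∀ z, |δ z| ≤ |z|) {v : X → ℝ} (hv : Measurable v) {K : ℝ}
    (hvK : ∀ y, |v y| ≤ K * ω y) : Integrable (fun y => δ (v y)) μ :=
  (hω.const_mul K).mono' (hδc.measurable.comp hv).aestronglyMeasurable
    (.of_forall fun y => (hδ_abs _).trans (hvK y))

lemma abs_actionValue_sub_le {v v' : X → ℝ} {p : X × A}
    (hv : Integrable (fun y => δ (v y)) (q p)) (hv' : Integrable (fun y => δ (v' y)) (q p))
    {α : ℝ} (hω : Integrable ω (q p) ∧ ∫ y, ω y ∂(q p) ≤ α * ω p.1) {c : ℝ} (hc : 0 ≤ c)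
    (h : ∀ y, |δ (v y) - δ (v' y)| ≤ c * ω y) :
    |actionValue q u δ v p - actionValue q u δ v' p| ≤ c * α * ω p.1 :=
  calc |actionValue q u δ v p - actionValue q u δ v' p|
      = ‖∫ y, (δ (v y) - δ (v' y)) ∂(q p)‖ := by
        rw [actionValue, actionValue, add_sub_add_left_eq_sub, integral_sub hv hv',
          Real.norm_eq_abs]
    _ ≤ ∫ y, c * ω y ∂(q p) := norm_integral_le_of_norm_le (hω.1.const_mul c) (.of_forall h)
    _ ≤ c * α * ω p.1 := by
      rw [integral_const_mul, mul_assoc]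
      exact mul_le_mul_of_nonneg_left hω.2 hc

lemma abs_actionValue_sub_le_of_abs_sub_le {α : ℝ}
    (hωq : ∀ p ∈ D, Integrable ω (q p) ∧ ∫ y, ω y ∂(q p) ≤ α * ω p.1)
    (hδc : Continuous δ) (hδ_abs : ∀ z, |δ z| ≤ |z|) {γ : ℝ → ℝ} (hγ0 : ∀ s, 0 ≤ s → 0 ≤ γ s)
    (hδ_mod : ∀ x s, 0 ≤ s → ∀ z₁ z₂, |z₁ - z₂| ≤ s * ω x → |δ z₁ - δ z₂| ≤ γ s * ω x)
    {v : X → ℝ} (hvm : Measurable v) {C : ℝ} (hC : ∀ x, |v x| ≤ C * ω x)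
    {V : X → ℝ} (hVm : Measurable V) {e : ℝ} (he : 0 ≤ e) (hVv : ∀ x, |V x - v x| ≤ e * ω x)
    {p : X × A} (hp : p ∈ D) :
    |actionValue q u δ V p - actionValue q u δ v p| ≤ γ e * α * ω p.1 := by
  have hVK (x : X) : |V x| ≤ (e + C) * ω x := by
    linarith [abs_sub_abs_le_abs_sub (V x) (v x), hVv x, hC x]
  exact abs_actionValue_sub_le (integrable_comp_of_abs_le_mul_s18 (hωq p hp).1 hδc hδ_abs hVm hVK)
    (integrable_comp_of_abs_le_mul_s18 (hωq p hp).1 hδc hδ_abs hvm hC) (hωq p hp) (hγ0 e he)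
    fun y => hδ_mod y e he _ _ (hVv y)

variable [MetricSpace X] [BorelSpace X] [TopologicalSpace A]

lemma upperSemicontinuousOn_actionValue [IsFiniteKernel q] (huusc : UpperSemicontinuousOn u D)
    (hqw : ∀ φ : X → ℝ, Continuous φ → (∃ C : ℝ, ∀ y, |φ y| ≤ C) →
      ContinuousOn (fun p : X × A => ∫ y, φ y ∂(q p)) D)
    (hωc : Continuous ω) (hωq : ∀ p ∈ D, Integrable ω (q p))
    (hωqc : ContinuousOn (fun p : X × A => ∫ y, ω y ∂(q p)) D)
    (hδc : Continuous δ) (hδm : Monotone δ) (hδ_abs : ∀ z, |δ z| ≤ |z|)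
    {v : X → ℝ} (hv : UpperSemicontinuous v) {K : ℝ} (hvK : ∀ y, |v y| ≤ K * ω y) :
    UpperSemicontinuousOn (actionValue q u δ v) D :=
  huusc.add (upperSemicontinuousOn_integral_kernel hqw (continuous_const.mul hωc)
    (fun p hp => (hωq p hp).const_mul K)
    ((continuousOn_const.mul hωqc).congr fun _ _ => integral_const_mul K _)
    (hδc.comp_upperSemicontinuous hv hδm) fun y => (hδ_abs _).trans (hvK y))

lemma bellmanOp_iterate_upperSemicontinuous_and_abs_sub_le [IsFiniteKernel q]
    (hDne : ∀ x : X, ∃ a : A, (x, a) ∈ D) (hAcomp : ∀ x : X, IsCompact {a : A | (x, a) ∈ D})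
    (hAusc : ∀ K : Set A, IsClosed K → IsClosed {x : X | ∃ a ∈ K, (x, a) ∈ D})
    (huusc : UpperSemicontinuousOn u D)
    (hqw : ∀ φ : X → ℝ, Continuous φ → (∃ C : ℝ, ∀ y, |φ y| ≤ C) →
      ContinuousOn (fun p : X × A => ∫ y, φ y ∂(q p)) D)
    (hωc : Continuous ω) {α : ℝ} (hα : 0 ≤ α)
    (hωq : ∀ p ∈ D, Integrable ω (q p) ∧ ∫ y, ω y ∂(q p) ≤ α * ω p.1)
    (hωqc : ContinuousOn (fun p : X × A => ∫ y, ω y ∂(q p)) D)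
    (hδc : Continuous δ) (hδm : Monotone δ) (hδ_abs : ∀ z, |δ z| ≤ |z|)
    {γ : ℝ → ℝ} (hγ0 : ∀ s, 0 ≤ s → 0 ≤ γ s)
    (hδ_mod : ∀ x s, 0 ≤ s → ∀ z₁ z₂, |z₁ - z₂| ≤ s * ω x → |δ z₁ - δ z₂| ≤ γ s * ω x)
    {v : X → ℝ} (hvm : Measurable v) (hvfix : bellmanOp q D u δ v = v)
    {C : ℝ} (hC0 : 0 ≤ C) (hC : ∀ x, |v x| ≤ C * ω x) (n : ℕ) :
    UpperSemicontinuous ((bellmanOp q D u δ)^[n] fun _ => 0) ∧ 0 ≤ (fun s => α * γ s)^[n] C ∧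
      ∀ x, |(bellmanOp q D u δ)^[n] (fun _ => 0) x - v x| ≤ (fun s => α * γ s)^[n] C * ω x := by
  induction n with
  | zero => exact ⟨upperSemicontinuous_const, hC0, fun x => by simpa using hC x⟩
  | succ n ih =>
    obtain ⟨hV, he, hVv⟩ := ih
    set V := (bellmanOp q D u δ)^[n] fun _ => 0
    set e := (fun s => α * γ s)^[n] C
    simp only [Function.iterate_succ_apply']
    have hG := upperSemicontinuousOn_actionValue huusc hqw hωc (fun p hp => (hωq p hp).1) hωqc
      hδc hδm hδ_abs hV (K := e + C)
      fun x => by linarith [abs_sub_abs_le_abs_sub (V x) (v x), hVv x, hC x]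
    refine ⟨upperSemicontinuous_sSup_image (upperHemicontinuous_of_isClosed hAusc) hAcomp hDne hG,
      mul_nonneg hα (hγ0 e he), fun x => ?_⟩
    calc |bellmanOp q D u δ V x - v x| = |bellmanOp q D u δ V x - bellmanOp q D u δ v x| := by
          rw [hvfix]
      _ ≤ γ e * α * ω x := abs_csSup_image_sub_le (hDne x)
          ((hG.comp_prodMk x).bddAbove_of_isCompact (hAcomp x)) fun a ha =>
            abs_actionValue_sub_le_of_abs_sub_le hωq hδc hδ_abs hγ0 hδ_mod hvm hC
              hV.measurable he hVv ha
      _ = α * γ e * ω x := by ring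

end Bellman

theorem policy_iteration_accumulation_general
    {X A : Type*}
    [MetricSpace X] [MeasurableSpace X] [BorelSpace X]
    [MetricSpace A] [MeasurableSpace A]
    (D : Set (X × A)) (hDne : ∀ x : X, ∃ a : A, (x, a) ∈ D)
    (q : Kernel (X × A) X) [IsMarkovKernel q]
    (ω : X → ℝ) (hω1 : ∀ x, 1 ≤ ω x)
    (u : X × A → ℝ)
    -- assumptions (A)
    (b : ℝ)
    -- assumptions (B)
    (δ : ℝ → ℝ) (γ : ℝ → ℝ)
    (hγm : MonotoneOn γ (Set.Ici 0)) (hγ0 : ∀ s : ℝ, 0 ≤ s → 0 ≤ γ s)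
    (hγlt : ∀ s : ℝ, 0 < s → γ s < s)
    (hδγ : ∀ z₁ z₂ : ℝ, |δ z₁ - δ z₂| ≤ γ |z₁ - z₂|)
    (hδm : Monotone δ) (hδ0 : δ 0 = 0)
    (hγsub : ∀ y : ℝ, 0 ≤ y → ∀ s : ℝ, 0 ≤ s → γ (y + s) ≤ γ y + γ s)
    (hγω : ∀ x : X, ∀ y : ℝ, 0 < y → γ (ω x * y) ≤ ω x * γ y)
    (α : ℝ) (hα : 0 < α)
    (hωq : ∀ p ∈ D, Integrable ω (q p) ∧ ∫ y, ω y ∂(q p) ≤ α * ω p.1)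
    (hαcase : α ≤ 1 ∨ (1 < α ∧ ∀ s : ℝ, 0 < s → α * γ s < s))
    -- assumptions (W)
    (hAcomp : ∀ x : X, IsCompact {a : A | (x, a) ∈ D})
    (hAusc : ∀ K : Set A, IsClosed K → IsClosed {x : X | ∃ a ∈ K, (x, a) ∈ D})
    (huusc : UpperSemicontinuousOn u D)
    (hqw : ∀ φ : X → ℝ, Continuous φ → (∃ C : ℝ, ∀ y, |φ y| ≤ C) →
      ContinuousOn (fun p : X × A => ∫ y, φ y ∂(q p)) D)
    (hωc : Continuous ω)
    (hωqc : ContinuousOn (fun p : X × A => ∫ y, ω y ∂(q p)) D)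
    -- the fixed point `v*` of `T`
    (vstar : X → ℝ) (hvstarm : Measurable vstar)
    (hvstarb : ∃ C : ℝ, ∀ x, |vstar x| ≤ C * ω x)
    (hvstarfix : bellmanOp q D u δ vstar = vstar) :
    ∀ x : X,
      (∃ (a : A) (aseq : ℕ → A),
        (∀ n : ℕ, aseq n ∈ {a' : A | (x, a') ∈ D ∧ ∀ b' : A, (x, b') ∈ D →
          u (x, b') + ∫ y, δ ((bellmanOp q D u δ)^[n] (fun _ => 0) y) ∂(q (x, b')) ≤
            u (x, a') + ∫ y, δ ((bellmanOp q D u δ)^[n] (fun _ => 0) y) ∂(q (x, a'))}) ∧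
        MapClusterPt a atTop aseq) ∧
      (∀ a : A,
        (∃ aseq : ℕ → A,
          (∀ n : ℕ, aseq n ∈ {a' : A | (x, a') ∈ D ∧ ∀ b' : A, (x, b') ∈ D →
            u (x, b') + ∫ y, δ ((bellmanOp q D u δ)^[n] (fun _ => 0) y) ∂(q (x, b')) ≤
              u (x, a') + ∫ y, δ ((bellmanOp q D u δ)^[n] (fun _ => 0) y) ∂(q (x, a'))}) ∧
          MapClusterPt a atTop aseq) →
        (x, a) ∈ D ∧ ∀ b : A, (x, b) ∈ D →
          u (x, b) + ∫ y, δ (vstar y) ∂(q (x, b)) ≤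
            u (x, a) + ∫ y, δ (vstar y) ∂(q (x, a))) := by
  have hω0 (x : X) : 0 ≤ ω x := zero_le_one.trans (hω1 x)
  have hγle (s : ℝ) (hs : 0 ≤ s) : γ s ≤ s := hγm.le_self_of_forall_pos_lt hγlt hs
  have hδlip (z₁ z₂ : ℝ) : |δ z₁ - δ z₂| ≤ |z₁ - z₂| := (hδγ z₁ z₂).trans (hγle _ (abs_nonneg _))
  have hδc : Continuous δ := (LipschitzWith.of_dist_le_mul (K := 1) fun z₁ z₂ => by
    simpa [Real.dist_eq] using hδlip z₁ z₂).continuous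
  have hδ_abs (z : ℝ) : |δ z| ≤ |z| := by simpa [hδ0] using hδlip z 0
  have hδ_mod (x : X) (s : ℝ) (hs : 0 ≤ s) (z₁ z₂ : ℝ) (h : |z₁ - z₂| ≤ s * ω x) :
      |δ z₁ - δ z₂| ≤ γ s * ω x :=
    abs_sub_le_mul_of_modulus hδγ hγm (le_antisymm (hγle 0 le_rfl) (hγ0 0 le_rfl)) (hω0 x)
      (hγω x) hs h
  obtain ⟨C, hC⟩ := hvstarb
  have hC' (x : X) : |vstar x| ≤ max C 0 * ω x :=
    (hC x).trans (mul_le_mul_of_nonneg_right (le_max_left C 0) (hω0 x))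
  set V := fun n => (bellmanOp q D u δ)^[n] fun _ => 0
  set e := fun n => (fun s => α * γ s)^[n] (max C 0)
  have hV := bellmanOp_iterate_upperSemicontinuous_and_abs_sub_le hDne hAcomp hAusc huusc hqw
    hωc hα.le hωq hωqc hδc hδm hδ_abs hγ0 hδ_mod hvstarm hvstarfix (le_max_right C 0) hC'
  have hγe : Tendsto (fun n => γ (e n)) atTop (𝓝 0) :=
    squeeze_zero (fun n => hγ0 _ (hV n).2.1) (fun n => hγle _ (hV n).2.1) <|
      tendsto_iterate_mul_nhds_zero hγm hγ0 hγle hγsub hα.le (fun s hs => hαcase.elim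
        (fun h => (mul_le_of_le_one_left (hγ0 s hs.le) h).trans_lt (hγlt s hs)) fun h => h.2 s hs)
        (le_max_right C 0)
  intro x
  have hF (n : ℕ) :
      UpperSemicontinuousOn (fun a => actionValue q u δ (V n) (x, a)) {a | (x, a) ∈ D} :=
    (upperSemicontinuousOn_actionValue huusc hqw hωc (fun p hp => (hωq p hp).1) hωqc hδc hδm
      hδ_abs (hV n).1 (K := e n + max C 0) fun y => by
        linarith [abs_sub_abs_le_abs_sub (V n y) (vstar y), (hV n).2.2 y, hC' y]).comp_prodMk x
  have hunif : TendstoUniformlyOn (fun n a => actionValue q u δ (V n) (x, a))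
      (fun a => actionValue q u δ vstar (x, a)) atTop {a | (x, a) ∈ D} :=
    tendstoUniformlyOn_of_abs_sub_le (by simpa using (hγe.mul_const α).mul_const (ω x))
      fun n a ha => abs_actionValue_sub_le_of_abs_sub_le hωq hδc hδ_abs hγ0 hδ_mod hvstarm hC'
        (hV n).1.measurable (hV n).2.1 (hV n).2.2 ha
  refine ⟨(hAcomp x).exists_mapClusterPt_isMaxOn (hDne x) hF atTop,
    fun a ⟨aseq, haseq, hclus⟩ => ?_⟩
  have ha : (x, a) ∈ D :=
    (hAcomp x).isClosed.mem_of_mapClusterPt hclus (.of_forall fun n => (haseq n).1)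
  exact ⟨ha, hclus.isMaxOn_of_tendstoUniformlyOn hF hunif (fun n => (haseq n).1)
    (fun n => (haseq n).2) ha⟩

/-- Policy iteration (Theorem 3 of the paper): for every `x`, the upper limit
`Ls A_n*(x)` of the argmax sets of the value-iteration functions `V_n = T⁽ⁿ⁾𝟎`
is nonempty and contained in the argmax set `A*(x)` of the Bellman equation
for the fixed point `v*` of `T`. -/
theorem policy_iteration_accumulation
    {X A : Type*}
    [MetricSpace X] [SecondCountableTopology X] [MeasurableSpace X] [BorelSpace X] [Nonempty X]
    [MetricSpace A] [SecondCountableTopology A] [MeasurableSpace A] [BorelSpace A] [Nonempty A]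
    (D : Set (X × A)) (hD : MeasurableSet D) (hDne : ∀ x : X, ∃ a : A, (x, a) ∈ D)
    (q : Kernel (X × A) X) [IsMarkovKernel q]
    (ω : X → ℝ) (hωm : Measurable ω) (hω1 : ∀ x, 1 ≤ ω x)
    (u : X × A → ℝ) (hu : Measurable u)
    -- assumptions (A)
    (b c : ℝ) (hb : 0 < b) (hc : 0 < c)
    (huA : ∀ p ∈ D, -(b * ω p.1) ≤ u p ∧ u p ≤ c * ω p.1)
    -- assumptions (B)
    (δ : ℝ → ℝ) (γ : ℝ → ℝ)
    (hγm : MonotoneOn γ (Set.Ici 0)) (hγ0 : ∀ s : ℝ, 0 ≤ s → 0 ≤ γ s)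
    (hγlt : ∀ s : ℝ, 0 < s → γ s < s)
    (hδγ : ∀ z₁ z₂ : ℝ, |δ z₁ - δ z₂| ≤ γ |z₁ - z₂|)
    (hδm : Monotone δ) (hδ0 : δ 0 = 0)
    (hγsub : ∀ y : ℝ, 0 ≤ y → ∀ s : ℝ, 0 ≤ s → γ (y + s) ≤ γ y + γ s)
    (hγω : ∀ x : X, ∀ y : ℝ, 0 < y → γ (ω x * y) ≤ ω x * γ y)
    (α : ℝ) (hα : 0 < α)
    (hωq : ∀ p ∈ D, Integrable ω (q p) ∧ ∫ y, ω y ∂(q p) ≤ α * ω p.1)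
    (hαcase : α ≤ 1 ∨ (1 < α ∧ ∀ s : ℝ, 0 < s → α * γ s < s))
    -- assumptions (W)
    (hAcomp : ∀ x : X, IsCompact {a : A | (x, a) ∈ D})
    (hAusc : ∀ K : Set A, IsClosed K → IsClosed {x : X | ∃ a ∈ K, (x, a) ∈ D})
    (huusc : UpperSemicontinuousOn u D)
    (hqw : ∀ φ : X → ℝ, Continuous φ → (∃ C : ℝ, ∀ y, |φ y| ≤ C) →
      ContinuousOn (fun p : X × A => ∫ y, φ y ∂(q p)) D)
    (hωc : Continuous ω)
    (hωqc : ContinuousOn (fun p : X × A => ∫ y, ω y ∂(q p)) D)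
    -- the fixed point `v*` of `T`
    (vstar : X → ℝ) (hvstarm : Measurable vstar)
    (hvstarb : ∃ C : ℝ, ∀ x, |vstar x| ≤ C * ω x)
    (hvstarfix : bellmanOp q D u δ vstar = vstar) :
    ∀ x : X,
      (∃ (a : A) (aseq : ℕ → A),
        (∀ n : ℕ, aseq n ∈ {a' : A | (x, a') ∈ D ∧ ∀ b' : A, (x, b') ∈ D →
          u (x, b') + ∫ y, δ ((bellmanOp q D u δ)^[n] (fun _ => 0) y) ∂(q (x, b')) ≤
            u (x, a') + ∫ y, δ ((bellmanOp q D u δ)^[n] (fun _ => 0) y) ∂(q (x, a'))}) ∧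
        MapClusterPt a atTop aseq) ∧
      (∀ a : A,
        (∃ aseq : ℕ → A,
          (∀ n : ℕ, aseq n ∈ {a' : A | (x, a') ∈ D ∧ ∀ b' : A, (x, b') ∈ D →
            u (x, b') + ∫ y, δ ((bellmanOp q D u δ)^[n] (fun _ => 0) y) ∂(q (x, b')) ≤
              u (x, a') + ∫ y, δ ((bellmanOp q D u δ)^[n] (fun _ => 0) y) ∂(q (x, a'))}) ∧
          MapClusterPt a atTop aseq) →
        (x, a) ∈ D ∧ ∀ b : A, (x, b) ∈ D →
          u (x, b) + ∫ y, δ (vstar y) ∂(q (x, b)) ≤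
            u (x, a) + ∫ y, δ (vstar y) ∂(q (x, a))) :=
  policy_iteration_accumulation_general D hDne q ω hω1 u b δ γ hγm hγ0 hγlt hδγ hδm hδ0 hγsub hγω α
    hα hωq hαcase hAcomp hAusc huusc hqw hωc hωqc vstar hvstarm hvstarb hvstarfix
end

section
/- Let X be a Borel space, q a Borel measurable transition probability kernel from X to X, ω : X → [1,∞) Borel measurable with ∫_X ω(y) q(dy|x) ≤ αω(x) for all x ∈ X and some α > 0, and let R : X → ℝ and C : X → ℝ be Borel measurable with |R(x)| ≤ ω(x) and |C(x)| ≤ ω(x) for all x ∈ X. Let δ : ℝ → ℝ and γ : [0,∞) → [0,∞) satisfy: γ is increasing with γ(s) < s for s > 0; |δ(z₁) − δ(z₂)| ≤ γ(|z₁ − z₂|) for all reals; δ is increasing with δ(0) = 0; γ is subadditive and γ(ω(x)y) ≤ ω(x)γ(y) for x ∈ X, y > 0; and either α ≤ 1 or (α > 1 and αγ(s) < s for all s > 0). Then there exists a Borel measurable function v* : X → ℝ with sup_x |v*(x)|/ω(x) < ∞ such that v*(x) = max{ R(x), C(x) + ∫_X δ(v*(y)) q(dy|x) } for all x ∈ X,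 and v* is the unique such function in the class of Borel measurable functions v with sup_x |v(x)|/ω(x) < ∞. -/
open MeasureTheory ProbabilityTheory Filter Topology

/-- Bellman equation for the optimal stopping problem with non-linear discounting
(Proposition 1(a) of the paper): there is a unique Borel measurable `ω`-bounded
function `v*` with `v*(x) = max { R(x), C(x) + ∫ δ(v*(y)) q(dy|x) }`. -/
theorem optimal_stopping_bellman_equation
    {X : Type*}
    [MetricSpace X] [SecondCountableTopology X] [MeasurableSpace X] [BorelSpace X] [Nonempty X]
    (q : Kernel X X) [IsMarkovKernel q]
    (ω : X → ℝ) (hωm : Measurable ω) (hω1 : ∀ x, 1 ≤ ω x)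
    (α : ℝ) (hα : 0 < α)
    (hωq : ∀ x : X, Integrable ω (q x) ∧ ∫ y, ω y ∂(q x) ≤ α * ω x)
    (R C : X → ℝ) (hR : Measurable R) (hC : Measurable C)
    (hRb : ∀ x, |R x| ≤ ω x) (hCb : ∀ x, |C x| ≤ ω x)
    (δ : ℝ → ℝ) (γ : ℝ → ℝ)
    (hγm : MonotoneOn γ (Set.Ici 0)) (hγ0 : ∀ s : ℝ, 0 ≤ s → 0 ≤ γ s)
    (hγlt : ∀ s : ℝ, 0 < s → γ s < s)
    (hδγ : ∀ z₁ z₂ : ℝ, |δ z₁ - δ z₂| ≤ γ |z₁ - z₂|)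
    (hδm : Monotone δ) (hδ0 : δ 0 = 0)
    (hγsub : ∀ y : ℝ, 0 ≤ y → ∀ s : ℝ, 0 ≤ s → γ (y + s) ≤ γ y + γ s)
    (hγω : ∀ x : X, ∀ y : ℝ, 0 < y → γ (ω x * y) ≤ ω x * γ y)
    (hαcase : α ≤ 1 ∨ (1 < α ∧ ∀ s : ℝ, 0 < s → α * γ s < s)) :
    ∃ vstar : X → ℝ, Measurable vstar ∧ (∃ c : ℝ, ∀ x, |vstar x| ≤ c * ω x) ∧
      (∀ x, vstar x = max (R x) (C x + ∫ y, δ (vstar y) ∂(q x))) ∧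
      ∀ w : X → ℝ, Measurable w → (∃ c : ℝ, ∀ x, |w x| ≤ c * ω x) →
        (∀ x, w x = max (R x) (C x + ∫ y, δ (w y) ∂(q x))) → w = vstar := by
  classical
  have hω0 : ∀ x, (0:ℝ) < ω x := fun x => lt_of_lt_of_le one_pos (hω1 x)
  -- `γ 0 = 0`
  have hγ00 : γ 0 = 0 := by
    by_contra h
    have hpos : 0 < γ 0 := lt_of_le_of_ne (hγ0 0 le_rfl) (Ne.symm h)
    have h1 : γ (γ 0) < γ 0 := hγlt _ hpos
    have h2 : γ 0 ≤ γ (γ 0) :=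
      hγm (Set.mem_Ici.mpr le_rfl) (Set.mem_Ici.mpr hpos.le) hpos.le
    linarith
  -- the modulus `φ`
  set φ : ℝ → ℝ := fun s => α * γ s with hφdef
  have hφ0 : φ 0 = 0 := by simp [hφdef, hγ00]
  have hφnn : ∀ s : ℝ, 0 ≤ s → 0 ≤ φ s := fun s hs => mul_nonneg hα.le (hγ0 s hs)
  have hφlt : ∀ s : ℝ, 0 < s → φ s < s := by
    intro s hs
    rcases hαcase with h1 | h2
    · have : α * γ s ≤ γ s := mul_le_of_le_one_left (hγ0 s hs.le) h1
      exact lt_of_le_of_lt this (hγlt s hs)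
    · exact h2.2 s hs
  have hφle : ∀ s : ℝ, 0 ≤ s → φ s ≤ s := by
    intro s hs
    rcases hs.eq_or_lt with h | h
    · rw [← h]; simp [hφ0]
    · exact (hφlt s h).le
  have hφmono : ∀ s t : ℝ, 0 ≤ s → s ≤ t → φ s ≤ φ t := fun s t hs hst =>
    mul_le_mul_of_nonneg_left (hγm (Set.mem_Ici.mpr hs) (Set.mem_Ici.mpr (hs.trans hst)) hst) hα.le
  have hφsub : ∀ y s : ℝ, 0 ≤ y → 0 ≤ s → φ (y + s) ≤ φ y + φ s := by
    intro y s hy hs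
    have := mul_le_mul_of_nonneg_left (hγsub y hy s hs) hα.le
    simpa [hφdef, mul_add] using this
  -- nonnegativity of iterates of `φ`
  have hiter_nn : ∀ t : ℝ, 0 ≤ t → ∀ n : ℕ, 0 ≤ φ^[n] t := by
    intro t ht n
    induction n with
    | zero => simpa using ht
    | succ n ih => rw [Function.iterate_succ_apply']; exact hφnn _ ih
  -- iterates of `φ` tend to zero
  have hφiter : ∀ t : ℝ, 0 ≤ t → Tendsto (fun n => φ^[n] t) atTop (𝓝 0) := by
    intro t ht
    set a : ℕ → ℝ := fun n => φ^[n] t with ha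
    have hsucc : ∀ n, a (n + 1) = φ (a n) := fun n => Function.iterate_succ_apply' φ n t
    have hann : ∀ n, 0 ≤ a n := hiter_nn t ht
    have hanti : Antitone a := antitone_nat_of_succ_le fun n => by
      rw [hsucc]; exact hφle _ (hann n)
    have hbdd : BddBelow (Set.range a) := ⟨0, by rintro x ⟨n, rfl⟩; exact hann n⟩
    have htend : Tendsto a atTop (𝓝 (⨅ n, a n)) := tendsto_atTop_ciInf hanti hbdd
    have hL0 : 0 ≤ ⨅ n, a n := le_ciInf hann
    have hLle : ∀ n, (⨅ n, a n) ≤ a n := fun n => ciInf_le hbdd n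
    set L := ⨅ n, a n with hL
    have hLkey : L ≤ φ L := by
      have hstep : ∀ n, a (n + 1) ≤ φ L + (a n - L) := by
        intro n
        have h1 : L + (a n - L) = a n := by ring
        calc a (n + 1) = φ (a n) := hsucc n
          _ = φ (L + (a n - L)) := by rw [h1]
          _ ≤ φ L + φ (a n - L) := hφsub _ _ hL0 (by linarith [hLle n])
          _ ≤ φ L + (a n - L) := by linarith [hφle _ (sub_nonneg.2 (hLle n))]
      have h3 : Tendsto (fun n => a (n + 1)) atTop (𝓝 L) :=
        htend.comp (tendsto_add_atTop_nat 1)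
      have h2 : Tendsto (fun n => φ L + (a n - L)) atTop (𝓝 (φ L + (L - L))) :=
        tendsto_const_nhds.add (htend.sub tendsto_const_nhds)
      have := le_of_tendsto_of_tendsto' h3 h2 hstep
      simpa using this
    have hLzero : L = 0 := by
      by_contra h
      have hLpos : 0 < L := lt_of_le_of_ne hL0 (Ne.symm h)
      exact absurd hLkey (not_le.2 (hφlt L hLpos))
    rw [hLzero] at htend
    exact htend
  -- the constant `M`
  set c : ℝ := φ 1 with hc
  have hc0 : 0 ≤ c := hφnn 1 zero_le_one
  have hc1 : c < 1 := hφlt 1 one_pos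
  set M : ℝ := (1 + c) / (1 - c) with hM
  have hM1 : 1 ≤ M := by
    rw [hM, le_div_iff₀ (by linarith)]
    linarith
  have hM0 : 0 < M := lt_of_lt_of_le one_pos hM1
  -- `γ n ≤ n * γ 1`
  have hγnat : ∀ n : ℕ, γ n ≤ n * γ 1 := by
    intro n
    induction n with
    | zero => simp [hγ00]
    | succ n ih =>
      have h1 : γ ((n : ℝ) + 1) ≤ γ n + γ 1 := hγsub n (Nat.cast_nonneg n) 1 zero_le_one
      push_cast
      push_cast at ih
      linarith
  have hMkey : 1 + φ M ≤ M := by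
    have h1 : φ M ≤ (M + 1) * c := by
      have hle : M ≤ (⌈M⌉₊ : ℝ) := Nat.le_ceil M
      have h2 : φ M ≤ φ (⌈M⌉₊ : ℝ) := hφmono _ _ hM0.le hle
      have h3 : φ ((⌈M⌉₊ : ℝ)) ≤ (⌈M⌉₊ : ℝ) * c := by
        have := mul_le_mul_of_nonneg_left (hγnat ⌈M⌉₊) hα.le
        rw [hφdef, hc, hφdef]
        calc α * γ (⌈M⌉₊ : ℝ) ≤ α * ((⌈M⌉₊ : ℝ) * γ 1) := this
          _ = (⌈M⌉₊ : ℝ) * (α * γ 1) := by ring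
      have h4 : (⌈M⌉₊ : ℝ) ≤ M + 1 := (Nat.ceil_lt_add_one hM0.le).le
      calc φ M ≤ (⌈M⌉₊ : ℝ) * c := h2.trans h3
        _ ≤ (M + 1) * c := mul_le_mul_of_nonneg_right h4 hc0
    have h5 : M * (1 - c) = 1 + c := by
      rw [hM]; exact div_mul_cancel₀ _ (by linarith)
    nlinarith
  -- `|δ z| ≤ γ |z|`
  have hδb : ∀ z : ℝ, |δ z| ≤ γ |z| := by
    intro z
    have := hδγ z 0
    simpa [hδ0] using this
  have hωint : ∀ x, Integrable ω (q x) := fun x => (hωq x).1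
  have hωle : ∀ x, ∫ y, ω y ∂(q x) ≤ α * ω x := fun x => (hωq x).2
  -- integrability and pointwise bound for `δ ∘ v`
  have hInt : ∀ v : X → ℝ, Measurable v → ∀ cv : ℝ, 0 < cv → (∀ x, |v x| ≤ cv * ω x) →
      (∀ y, |δ (v y)| ≤ γ cv * ω y) ∧ ∀ x, Integrable (fun y => δ (v y)) (q x) := by
    intro v hv cv hcv hb
    have hby : ∀ y, |δ (v y)| ≤ γ cv * ω y := by
      intro y
      have h1 : |v y| ≤ ω y * cv := by rw [mul_comm]; exact hb y
      calc |δ (v y)| ≤ γ |v y| := hδb _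
        _ ≤ γ (ω y * cv) := hγm (Set.mem_Ici.mpr (abs_nonneg _))
            (Set.mem_Ici.mpr (mul_nonneg (hω0 y).le hcv.le)) h1
        _ ≤ ω y * γ cv := hγω y cv hcv
        _ = γ cv * ω y := mul_comm _ _
    refine ⟨hby, fun x => ?_⟩
    refine Integrable.mono ((hωint x).const_mul (γ cv))
      ((hδm.measurable.comp hv).aestronglyMeasurable) ?_
    filter_upwards with y
    rw [Real.norm_eq_abs, Real.norm_eq_abs]
    exact (hby y).trans (le_abs_self _)
  -- the Bellman operator
  set T : (X → ℝ) → X → ℝ := fun v x => max (R x) (C x + ∫ y, δ (v y) ∂(q x)) with hTdef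
  -- measurability of `T v`
  have hTmeas : ∀ v : X → ℝ, Measurable v → Measurable (T v) := by
    intro v hv
    have h1 : StronglyMeasurable fun x => ∫ y, δ (v y) ∂(q x) := by
      apply MeasureTheory.StronglyMeasurable.integral_kernel_prod_right (κ := q)
        (f := fun _ y => δ (v y))
      exact ((hδm.measurable.comp hv).comp measurable_snd).stronglyMeasurable
    exact hR.max (hC.add h1.measurable)
  -- `T` preserves the bound `M`
  have hTbound : ∀ v : X → ℝ, Measurable v → (∀ x, |v x| ≤ M * ω x) →
      ∀ x, |T v x| ≤ M * ω x := by
    intro v hv hb x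
    obtain ⟨hby, hi⟩ := hInt v hv M hM0 hb
    have hγM : 0 ≤ γ M := hγ0 M hM0.le
    have hI : |∫ y, δ (v y) ∂(q x)| ≤ φ M * ω x := by
      calc |∫ y, δ (v y) ∂(q x)| ≤ ∫ y, |δ (v y)| ∂(q x) := by
            simpa [Real.norm_eq_abs] using norm_integral_le_integral_norm (fun y => δ (v y))
        _ ≤ ∫ y, γ M * ω y ∂(q x) :=
            integral_mono (hi x).abs ((hωint x).const_mul _) fun y => hby y
        _ = γ M * ∫ y, ω y ∂(q x) := integral_const_mul _ _
        _ ≤ γ M * (α * ω x) := mul_le_mul_of_nonneg_left (hωle x) hγM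
        _ = φ M * ω x := by rw [hφdef]; ring
    have h2 : |T v x| ≤ max |R x| |C x + ∫ y, δ (v y) ∂(q x)| := by
      rw [hTdef]; exact abs_max_le_max_abs_abs
    have h3 : |C x + ∫ y, δ (v y) ∂(q x)| ≤ ω x + φ M * ω x :=
      (abs_add_le _ _).trans (add_le_add (hCb x) hI)
    have h4 : |R x| ≤ ω x + φ M * ω x := by
      have := hRb x
      nlinarith [hφnn M hM0.le, hω0 x]
    calc |T v x| ≤ ω x + φ M * ω x := h2.trans (max_le h4 h3)
      _ ≤ M * ω x := by nlinarith [hω0 x]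
  -- the contraction estimate
  have hContr : ∀ v w : X → ℝ, Measurable v → Measurable w →
      ∀ cv : ℝ, 0 < cv → (∀ x, |v x| ≤ cv * ω x) →
      ∀ cw : ℝ, 0 < cw → (∀ x, |w x| ≤ cw * ω x) →
      ∀ K : ℝ, 0 ≤ K → (∀ x, |v x - w x| ≤ K * ω x) →
      ∀ x, |T v x - T w x| ≤ φ K * ω x := by
    intro v w hv hw cv hcv hbv cw hcw hbw K hK hvw x
    rcases hK.eq_or_lt with heq | hKpos
    · have hvweq : v = w := by
        funext y
        have h1 := hvw y
        rw [← heq] at h1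
        have : |v y - w y| ≤ 0 := by simpa using h1
        have := le_antisymm this (abs_nonneg _)
        linarith [abs_nonneg (v y - w y), abs_eq_zero.1 this, sub_eq_zero.1 (abs_eq_zero.1 this)]
      rw [hvweq, ← heq, hφ0, sub_self, abs_zero, zero_mul]
    · obtain ⟨_, hiv⟩ := hInt v hv cv hcv hbv
      obtain ⟨_, hiw⟩ := hInt w hw cw hcw hbw
      have hpt : ∀ y, |δ (v y) - δ (w y)| ≤ γ K * ω y := by
        intro y
        have h1 : |v y - w y| ≤ ω y * K := by rw [mul_comm]; exact hvw y
        calc |δ (v y) - δ (w y)| ≤ γ |v y - w y| := hδγ _ _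
          _ ≤ γ (ω y * K) := hγm (Set.mem_Ici.mpr (abs_nonneg _))
              (Set.mem_Ici.mpr (mul_nonneg (hω0 y).le hKpos.le)) h1
          _ ≤ ω y * γ K := hγω y K hKpos
          _ = γ K * ω y := mul_comm _ _
      have hII : |(∫ y, δ (v y) ∂(q x)) - ∫ y, δ (w y) ∂(q x)| ≤ φ K * ω x := by
        rw [← integral_sub (hiv x) (hiw x)]
        calc |∫ y, (δ (v y) - δ (w y)) ∂(q x)| ≤ ∫ y, |δ (v y) - δ (w y)| ∂(q x) := by
              simpa [Real.norm_eq_abs] using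
                norm_integral_le_integral_norm (fun y => δ (v y) - δ (w y))
          _ ≤ ∫ y, γ K * ω y ∂(q x) :=
              integral_mono ((hiv x).sub (hiw x)).abs ((hωint x).const_mul _) fun y => hpt y
          _ = γ K * ∫ y, ω y ∂(q x) := integral_const_mul _ _
          _ ≤ γ K * (α * ω x) := mul_le_mul_of_nonneg_left (hωle x) (hγ0 K hK)
          _ = φ K * ω x := by rw [hφdef]; ring
      have heq2 : |T v x - T w x| =
          |max (C x + ∫ y, δ (v y) ∂(q x)) (R x) - max (C x + ∫ y, δ (w y) ∂(q x)) (R x)| := by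
        simp only [hTdef]
        rw [max_comm (R x) (C x + ∫ y, δ (v y) ∂(q x)),
          max_comm (R x) (C x + ∫ y, δ (w y) ∂(q x))]
      rw [heq2]
      calc |max (C x + ∫ y, δ (v y) ∂(q x)) (R x) - max (C x + ∫ y, δ (w y) ∂(q x)) (R x)|
          ≤ |(C x + ∫ y, δ (v y) ∂(q x)) - (C x + ∫ y, δ (w y) ∂(q x))| :=
            abs_max_sub_max_le_abs _ _ _
        _ = |(∫ y, δ (v y) ∂(q x)) - ∫ y, δ (w y) ∂(q x)| := by ring_nf
        _ ≤ φ K * ω x := hII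
  -- the iterates
  set vs : ℕ → X → ℝ := fun n => T^[n] (fun _ => 0) with hvs
  have vs_zero : vs 0 = fun _ => 0 := rfl
  have vs_succ : ∀ n, vs (n + 1) = T (vs n) := fun n => Function.iterate_succ_apply' T n _
  have vs_meas : ∀ n, Measurable (vs n) := by
    intro n
    induction n with
    | zero => rw [vs_zero]; exact measurable_const
    | succ n ih => rw [vs_succ]; exact hTmeas _ ih
  have vs_bd : ∀ n x, |vs n x| ≤ M * ω x := by
    intro n
    induction n with
    | zero =>
      intro x; rw [vs_zero]
      simpa using mul_nonneg hM0.le (hω0 x).le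
    | succ n ih => intro x; rw [vs_succ]; exact hTbound _ (vs_meas n) ih x
  -- successive differences
  have hstepb : ∀ n x, |vs n x - vs (n + 1) x| ≤ φ^[n] M * ω x := by
    intro n
    induction n with
    | zero =>
      intro x
      rw [vs_zero]
      simpa using vs_bd 1 x
    | succ n ih =>
      intro x
      rw [vs_succ n, vs_succ (n + 1), Function.iterate_succ_apply']
      exact hContr (vs n) (vs (n + 1)) (vs_meas n) (vs_meas (n + 1)) M hM0 (vs_bd n)
        M hM0 (vs_bd (n + 1)) (φ^[n] M) (hiter_nn M hM0.le n) ih x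
  -- uniform Cauchy estimate
  have hCauchy : ∀ ε : ℝ, 0 < ε → ∃ N, ∀ n, N ≤ n → ∀ x, |vs N x - vs n x| ≤ ε * ω x := by
    intro ε hε
    have h1 : φ ε < ε := hφlt ε hε
    obtain ⟨N, hN⟩ : ∃ N, φ^[N] M < ε - φ ε :=
      ((hφiter M hM0.le).eventually (gt_mem_nhds (show (0:ℝ) < ε - φ ε by linarith))).exists
    refine ⟨N, ?_⟩
    have main : ∀ m, ∀ x, |vs N x - vs (N + m) x| ≤ ε * ω x := by
      intro m
      induction m with
      | zero =>
        intro x; simpa using mul_nonneg hε.le (hω0 x).le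
      | succ m ih =>
        intro x
        have hc := hContr (vs N) (vs (N + m)) (vs_meas N) (vs_meas (N + m)) M hM0 (vs_bd N)
          M hM0 (vs_bd (N + m)) ε hε.le ih x
        have h2 := hstepb N x
        have h3 : vs (N + (m + 1)) = T (vs (N + m)) := by
          rw [show N + (m + 1) = (N + m) + 1 by omega]; exact vs_succ (N + m)
        have h4 : vs (N + 1) = T (vs N) := vs_succ N
        rw [h3]
        calc |vs N x - T (vs (N + m)) x|
            ≤ |vs N x - vs (N + 1) x| + |vs (N + 1) x - T (vs (N + m)) x| := abs_sub_le _ _ _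
          _ = |vs N x - vs (N + 1) x| + |T (vs N) x - T (vs (N + m)) x| := by rw [h4]
          _ ≤ φ^[N] M * ω x + φ ε * ω x := add_le_add h2 hc
          _ ≤ (ε - φ ε) * ω x + φ ε * ω x := by nlinarith [hω0 x]
          _ = ε * ω x := by ring
    intro n hn x
    obtain ⟨m, rfl⟩ := Nat.exists_eq_add_of_le hn
    exact main m x
  -- pointwise Cauchy sequences
  have hCseq : ∀ x, CauchySeq fun n => vs n x := by
    intro x
    rw [Metric.cauchySeq_iff']
    intro ε hε
    have hεω : 0 < ε / (2 * ω x) := div_pos hε (by linarith [hω0 x])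
    obtain ⟨N, hN⟩ := hCauchy _ hεω
    refine ⟨N, fun n hn => ?_⟩
    have h1 := hN n hn x
    rw [Real.dist_eq]
    have h2 : |vs n x - vs N x| ≤ ε / (2 * ω x) * ω x := by rw [abs_sub_comm]; exact h1
    have hωne : ω x ≠ 0 := (hω0 x).ne'
    have h3 : ε / (2 * ω x) * ω x = ε / 2 := by field_simp
    rw [h3] at h2
    linarith
  -- the fixed point
  set vstar : X → ℝ := fun x => limUnder atTop fun n => vs n x with hvstardef
  have htend : ∀ x, Tendsto (fun n => vs n x) atTop (𝓝 (vstar x)) := fun x =>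
    (hCseq x).tendsto_limUnder
  have hvm : Measurable vstar :=
    measurable_of_tendsto_metrizable vs_meas (tendsto_pi_nhds.2 htend)
  have hvb : ∀ x, |vstar x| ≤ M * ω x := fun x =>
    le_of_tendsto (htend x).abs (Filter.Eventually.of_forall fun n => vs_bd n x)
  -- distance from iterates to the limit
  have hdist : ∀ ε : ℝ, 0 < ε → ∃ N, ∀ n, N ≤ n → ∀ x, |vs n x - vstar x| ≤ ε * ω x := by
    intro ε hε
    obtain ⟨N, hN⟩ := hCauchy (ε / 2) (by positivity)
    refine ⟨N, fun n hn x => ?_⟩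
    have hlim : Tendsto (fun m => |vs n x - vs m x|) atTop (𝓝 |vs n x - vstar x|) :=
      (tendsto_const_nhds.sub (htend x)).abs
    apply le_of_tendsto hlim
    filter_upwards [eventually_ge_atTop N] with m hm
    have h1 : |vs n x - vs N x| ≤ ε / 2 * ω x := by rw [abs_sub_comm]; exact hN n hn x
    have h2 : |vs N x - vs m x| ≤ ε / 2 * ω x := hN m hm x
    calc |vs n x - vs m x| ≤ |vs n x - vs N x| + |vs N x - vs m x| := abs_sub_le _ _ _
      _ ≤ ε / 2 * ω x + ε / 2 * ω x := add_le_add h1 h2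
      _ = ε * ω x := by ring
  -- the fixed point equation
  have hfix : ∀ x, vstar x = T vstar x := by
    intro x
    have key : ∀ ε : ℝ, 0 < ε → |vstar x - T vstar x| ≤ 3 * ε * ω x := by
      intro ε hε
      obtain ⟨N, hN⟩ := hdist ε hε
      have h1 : ∀ x', |vs N x' - vstar x'| ≤ ε * ω x' := hN N le_rfl
      have hc := hContr (vs N) vstar (vs_meas N) hvm M hM0 (vs_bd N) M hM0 hvb ε hε.le h1 x
      have h2 : |vs (N + 1) x - vstar x| ≤ ε * ω x := hN (N + 1) (Nat.le_succ N) x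
      have h3 : vs (N + 1) x = T (vs N) x := by rw [vs_succ]
      have h4 : |vstar x - vs (N + 1) x| ≤ ε * ω x := by rw [abs_sub_comm]; exact h2
      have h5 : |vs (N + 1) x - T vstar x| ≤ φ ε * ω x := by rw [h3]; exact hc
      have h6 : φ ε ≤ ε := hφle ε hε.le
      calc |vstar x - T vstar x|
          ≤ |vstar x - vs (N + 1) x| + |vs (N + 1) x - T vstar x| := abs_sub_le _ _ _
        _ ≤ ε * ω x + φ ε * ω x := add_le_add h4 h5
        _ ≤ 3 * ε * ω x := by nlinarith [hω0 x]
    by_contra hne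
    have hpos : 0 < |vstar x - T vstar x| := abs_pos.2 (sub_ne_zero.2 hne)
    set t := |vstar x - T vstar x| with ht
    have hωne : ω x ≠ 0 := (hω0 x).ne'
    have h7 := key (t / (6 * ω x)) (div_pos hpos (by linarith [hω0 x]))
    have h8 : 3 * (t / (6 * ω x)) * ω x = t / 2 := by field_simp; ring
    rw [h8] at h7
    linarith
  -- assemble
  refine ⟨vstar, hvm, ⟨M, hvb⟩, fun x => by rw [hfix x], ?_⟩
  -- uniqueness
  rintro w hwmeas ⟨cw, hwb⟩ hwfix
  have hcw1 : (0:ℝ) < max cw 1 := lt_of_lt_of_le one_pos (le_max_right _ _)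
  have hwb' : ∀ x, |w x| ≤ max cw 1 * ω x := fun x =>
    (hwb x).trans (mul_le_mul_of_nonneg_right (le_max_left _ _) (hω0 x).le)
  set c2 : ℝ := max cw 1 + M with hc2def
  have hc2pos : 0 < c2 := by positivity
  have hc2 : ∀ x, |w x - vstar x| ≤ c2 * ω x := by
    intro x
    calc |w x - vstar x| = |w x + -(vstar x)| := by rw [sub_eq_add_neg]
      _ ≤ |w x| + |-(vstar x)| := abs_add_le _ _
      _ = |w x| + |vstar x| := by rw [abs_neg]
      _ ≤ max cw 1 * ω x + M * ω x := add_le_add (hwb' x) (hvb x)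
      _ = c2 * ω x := by rw [hc2def]; ring
  have hwT : ∀ x, w x = T w x := fun x => hwfix x
  have hiterbd : ∀ n x, |w x - vstar x| ≤ φ^[n] c2 * ω x := by
    intro n
    induction n with
    | zero => intro x; simpa using hc2 x
    | succ n ih =>
      intro x
      have hc := hContr w vstar hwmeas hvm (max cw 1) hcw1 hwb' M hM0 hvb
        (φ^[n] c2) (hiter_nn c2 hc2pos.le n) ih x
      rw [Function.iterate_succ_apply']
      rw [hwT x, hfix x]
      exact hc
  funext x
  have hlim0 : Tendsto (fun n => φ^[n] c2 * ω x) atTop (𝓝 0) := by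
    have := (hφiter c2 hc2pos.le).mul_const (ω x)
    simpa using this
  have h9 : |w x - vstar x| ≤ 0 :=
    ge_of_tendsto hlim0 (Filter.Eventually.of_forall fun n => hiterbd n x)
  have := le_antisymm h9 (abs_nonneg _)
  exact sub_eq_zero.1 (abs_eq_zero.1 this)
end
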